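/- arXiv:0911.4624 — 10 statements merged into one kernel-verified Lean document; each statement's English description precedes it below -/
import Mathlib

section
/- Let L be an infinite filiform Lie algebra with basis {a, e₁, e₂, ...} satisfying [a, eⱼ] = e_{j+1} and [eⱼ, e_{j+1}] = Σ_{s≥1} λ_{js} e_{2j+1+s} (finitely many λ_{js} nonzero for each j). Then for 1 ≤ k < m, the remaining brackets are determined by the Jacobi identity: [e_k, e_m] = Σ_{s≥1} Σ_{j: 0 ≤ j-k ≤ m-j-1} (-1)^{j-k} C(m-j-1, j-k) λ_{js} e_{m+k+s}. -/
/-!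
Writing `a = B 0`, the Jacobi identity for `a, e_k, e_m` together with `[a, e_j] = e_{j+1}` gives
`[e_k, e_{m+1}] = [a, [e_k, e_m]] - [e_{k+1}, e_m]`, and `ad a` merely shifts every `e_{m+k+s}` by one.
So, by induction on `m`, the coefficient of `λ_{js} e_{m+k+s}` in `[e_k, e_m]` satisfies
`c(k, m+1) = c(k, m) - c(k+1, m)` with `c(k, k+1) = δ_{jk}`, and the signed binomial coefficients
solve this recursion by Pascal's rule.
-/

open Finset

/-- The coefficient of `λ_{js} e_{m+k+s}` in `[e_k, e_m]`. -/
def filiformCoeff {K : Type*} [CommRing K] (k m j : ℕ) : K :=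
  if k ≤ j ∧ 2 * j < m + k then (-1) ^ (j - k) * (Nat.choose (m - j - 1) (j - k) : K) else 0

section Coeff

variable {K : Type*} [CommRing K]

theorem filiformCoeff_self (k : ℕ) : (filiformCoeff k k : ℕ → K) = 0 :=
  funext fun _ => if_neg (by omega)

theorem filiformCoeff_eq_zero_of_add_le {k m j : ℕ} (h : m + k ≤ 2 * j) :
    (filiformCoeff k m j : K) = 0 :=
  if_neg (by omega)

theorem filiformCoeff_self_succ (k j : ℕ) :
    (filiformCoeff k (k + 1) j : K) = if j = k then 1 else 0 := by
  unfold filiformCoeff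
  by_cases hj : j = k
  · rw [if_pos (by omega), if_pos hj, hj]
    simp
  · rw [if_neg (by omega), if_neg hj]

theorem filiformCoeff_succ_right {k m : ℕ} (hkm : k < m) :
    (filiformCoeff k (m + 1) : ℕ → K) = filiformCoeff k m - filiformCoeff (k + 1) m := by
  funext j
  simp only [filiformCoeff, Pi.sub_apply]
  rcases lt_trichotomy j k with hj | rfl | hj
  · rw [if_neg (by omega), if_neg (by omega), if_neg (by omega), sub_zero]
  · rw [if_pos (by omega), if_pos (by omega), if_neg (by omega)]
    simp
  by_cases hlt : 2 * j < m + k + 1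
  swap
  · rw [if_neg (by omega), if_neg (by omega), if_neg (by omega), sub_zero]
  have hjk : j - k = j - (k + 1) + 1 := by omega
  by_cases hmid : 2 * j = m + k
  · -- both extreme binomial coefficients are `C(r, r) = 1`
    rw [if_pos (by omega), if_neg (by omega), if_pos (by omega),
      show m + 1 - j - 1 = j - k by omega, show m - j - 1 = j - (k + 1) by omega, hjk,
      Nat.choose_self, Nat.choose_self, pow_succ]
    ring
  · rw [if_pos (by omega), if_pos (by omega), if_pos (by omega),
      show m + 1 - j - 1 = m - j - 1 + 1 by omega, hjk, Nat.choose_succ_succ, pow_succ]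
    push_cast
    ring

end Coeff

section Sum

variable {K L : Type*} [CommRing K] [LieRing L] [LieAlgebra K L] (e : ℕ → L)
  (lam : ℕ → ℕ →₀ K)

def filiformSum (S : Finset ℕ) (n : ℕ) (w : ℕ → K) : L :=
  ∑ j ∈ S, (lam j).sum fun s c => (w j * c) • e (n + s)

variable {e lam}

theorem filiformSum_sub (S : Finset ℕ) (n : ℕ) (w w' : ℕ → K) :
    filiformSum e lam S n (w - w') = filiformSum e lam S n w - filiformSum e lam S n w' := by
  simp only [filiformSum, Finsupp.sum, Pi.sub_apply, sub_mul, sub_smul, sum_sub_distrib]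

theorem filiformSum_subset {S T : Finset ℕ} (hST : S ⊆ T) {n : ℕ} {w : ℕ → K}
    (hw : ∀ j ∈ T, j ∉ S → w j = 0) :
    filiformSum e lam S n w = filiformSum e lam T n w :=
  sum_subset hST fun j hjT hjS => by
    simp only [hw j hjT hjS, zero_mul, zero_smul, Finsupp.sum, sum_const_zero]

theorem lie_filiformSum {a : L} (ha : ∀ j, 1 ≤ j → ⁅a, e j⁆ = e (j + 1)) (S : Finset ℕ)
    {n : ℕ} (hn : 1 ≤ n) (w : ℕ → K) :
    ⁅a, filiformSum e lam S n w⁆ = filiformSum e lam S (n + 1) w := by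
  simp only [filiformSum, Finsupp.sum, lie_sum, lie_smul]
  refine sum_congr rfl fun j _ => sum_congr rfl fun s _ => ?_
  rw [ha _ (by omega), add_right_comm]

theorem lie_eq_filiformSum {a : L} (ha : ∀ j, 1 ≤ j → ⁅a, e j⁆ = e (j + 1))
    (he : ∀ j, 1 ≤ j → ⁅e j, e (j + 1)⁆ = (lam j).sum fun s c => c • e (2 * j + 1 + s)) :
    ∀ m k, 1 ≤ k → k ≤ m → ⁅e k, e m⁆ = filiformSum e lam (range m) (m + k) (filiformCoeff k m)
  | 0, _, hk, hkm => by omega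
  | m + 1, k, hk, hkm => by
    rcases (show k = m + 1 ∨ k = m ∨ k < m by omega) with rfl | rfl | hlt
    · rw [lie_self, filiformCoeff_self]
      simp [filiformSum]
    · rw [he k hk, filiformSum, sum_eq_single_of_mem k (by simp) fun j _ hj => by
        simp [filiformCoeff_self_succ, hj]]
      simp only [filiformCoeff_self_succ, if_true, one_mul]
      exact Finsupp.sum_congr fun s _ => by rw [show 2 * k + 1 + s = k + 1 + k + s by omega]
    · have jacobi : ⁅e k, e (m + 1)⁆ = ⁅a, ⁅e k, e m⁆⁆ - ⁅e (k + 1), e m⁆ := by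
        rw [leibniz_lie a (e k) (e m), ha k hk, ha m (by omega)]
        abel
      rw [jacobi, lie_eq_filiformSum ha he m k hk hlt.le,
        lie_eq_filiformSum ha he m (k + 1) (by omega) hlt, lie_filiformSum ha _ (by omega),
        show m + (k + 1) = m + k + 1 by omega, ← filiformSum_sub,
        ← filiformCoeff_succ_right hlt, show m + k + 1 = m + 1 + k by omega]
      exact filiformSum_subset (range_subset_range.2 (Nat.le_succ m)) fun j hj hj' =>
        filiformCoeff_eq_zero_of_add_le (by simp only [mem_range] at hj hj'; omega)

end Sum

theorem filiform_bracket_formula_general (K : Type*) [Field K]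
    (L : Type*) [LieRing L] [LieAlgebra K L] (B : Module.Basis ℕ K L)
    (lam : ℕ → (ℕ →₀ K))
    (ha : ∀ j, 1 ≤ j → ⁅B 0, B j⁆ = B (j + 1))
    (he : ∀ j, 1 ≤ j → ⁅B j, B (j + 1)⁆ = (lam j).sum fun s c => c • B (2 * j + 1 + s)) :
    ∀ k m, 1 ≤ k → k < m →
      ⁅B k, B m⁆ =
        ∑ j ∈ (Finset.Icc k m).filter (fun j => 2 * j < m + k),
          (lam j).sum fun s c =>
            ((-1 : K) ^ (j - k) * (Nat.choose (m - j - 1) (j - k) : K) * c) •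
              B (m + k + s) := by
  intro k m hk hkm
  have hS : (Icc k m).filter (fun j => 2 * j < m + k) ⊆ range m := fun j hj => by
    simp only [mem_filter, mem_Icc, mem_range] at hj ⊢
    omega
  have hvanish : ∀ j ∈ range m, j ∉ (Icc k m).filter (fun j => 2 * j < m + k) →
      (filiformCoeff k m j : K) = 0 := fun j _ hj => if_neg (by
    simp only [mem_filter, mem_Icc] at hj
    omega)
  rw [lie_eq_filiformSum ha he m k hk hkm.le, ← filiformSum_subset hS hvanish]
  refine sum_congr rfl fun j hj => ?_
  simp only [mem_filter, mem_Icc] at hj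
  simp only [filiformCoeff, if_pos (show k ≤ j ∧ 2 * j < m + k from ⟨hj.1.1, hj.2⟩)]

/-- In an infinite filiform Lie algebra with basis `B` (`B 0 = a`, `B j = eⱼ`),
brackets `[a, eⱼ] = e_{j+1}` and
`[eⱼ, e_{j+1}] = Σ_{s ≥ 1} λ_{js} e_{2j+1+s}`, the remaining brackets are
determined by the Jacobi identity: for `1 ≤ k < m`,
`[e_k, e_m] = Σ_{s ≥ 1} Σ_{j : 0 ≤ j - k ≤ m - j - 1} (-1)^(j-k) C(m-j-1, j-k) λ_{js} e_{m+k+s}`. -/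
theorem filiform_bracket_formula (K : Type*) [Field K] [CharZero K]
    (L : Type*) [LieRing L] [LieAlgebra K L] (B : Module.Basis ℕ K L)
    (lam : ℕ → (ℕ →₀ K)) (hlam0 : ∀ j, lam j 0 = 0)
    (ha : ∀ j, 1 ≤ j → ⁅B 0, B j⁆ = B (j + 1))
    (he : ∀ j, 1 ≤ j → ⁅B j, B (j + 1)⁆ = (lam j).sum fun s c => c • B (2 * j + 1 + s)) :
    ∀ k m, 1 ≤ k → k < m →
      ⁅B k, B m⁆ =
        ∑ j ∈ (Finset.Icc k m).filter (fun j => 2 * j < m + k),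
          (lam j).sum fun s c =>
            ((-1 : K) ^ (j - k) * (Nat.choose (m - j - 1) (j - k) : K) * c) •
              B (m + k + s) :=
  filiform_bracket_formula_general K L B lam ha he
end

section
/- If L is a solvable infinite filiform Lie algebra, then L^k is abelian for some k ≥ 1. -/
/-!
Send `eᵢ ↦ tⁱ`: then `ad a` is multiplication by `t`, and the structure constants
`c i j = [e_{i+1}, e_{j+1}]` are polynomials in `t` with `t ^ (i + j) ∣ c i j`. Extend the bracket
`K[t]`-bilinearly to polynomials in a second variable `u`, with `uⁱ ↔ e_{i+1}`; the Leibniz rule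
for `ad a` says that multiplication by `u` is adjoint to multiplication by `t - u`.

A solvable `L` has a nonzero abelian ideal. It contains an element `uᵖ y(u)` with `y(0) ≠ 0`
together with all its `ad a`-iterates, and adjointness turns this into the linear recurrence
`⟨y(u) y(t - u) uⁱ, uʲ⟩ = 0` for `i, j ≥ p`. Its coefficient at `u⁰`, `y(0) y(t)`, is prime to
`t`, so the recurrence pushes the `t`-divisibility of `c i j` to every order: `c i j = 0` for
`i, j ≥ p`. As `L^k` lies in the span of `e_k, e_{k+1}, …`, some `L^k` is abelian.
-/

open LieModule Polynomial

namespace Filiform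

section Pairing

variable {R : Type*} [CommRing R] (c : ℕ → ℕ → R)

noncomputable def pairing : R[X] →ₗ[R] R[X] →ₗ[R] R :=
  lsum fun i => LinearMap.toSpanSingleton R _ (lsum fun j => LinearMap.toSpanSingleton R R (c i j))

lemma pairing_monomial (i j : ℕ) (a b : R) :
    pairing c (monomial i a) (monomial j b) = a * b * c i j := by
  simp [pairing, mul_assoc]

lemma pairing_mul_X_pow_X_pow (E : R[X]) (i j : ℕ) :
    pairing c (E * X ^ i) (X ^ j) = ∑ l ∈ E.support, E.coeff l * c (l + i) j := by
  conv_lhs => rw [E.as_sum_support]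
  simp [Finset.sum_mul, X_pow_eq_monomial, monomial_mul_monomial, pairing_monomial]

variable {c} {z : R} (hc : ∀ i j, c (i + 1) j + c i (j + 1) = z * c i j)
include hc

lemma pairing_X_mul_left (f g : R[X]) :
    pairing c (X * f) g = pairing c f ((C z - X) * g) := by
  induction f using Polynomial.induction_on' with
  | add f₁ f₂ h₁ h₂ => simp only [mul_add, map_add, LinearMap.add_apply, h₁, h₂]
  | monomial i a =>
    induction g using Polynomial.induction_on' with
    | add g₁ g₂ h₁ h₂ => simp only [mul_add, map_add, h₁, h₂]
    | monomial j b =>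
      simp only [X_mul_monomial, sub_mul, C_mul_monomial, X_mul_monomial, map_sub,
        pairing_monomial]
      linear_combination a * b * hc i j

lemma pairing_mul_left (h f g : R[X]) :
    pairing c (h * f) g = pairing c f (h.comp (C z - X) * g) := by
  induction h using Polynomial.induction_on generalizing g with
  | C a => simp [← smul_eq_C_mul]
  | add p q hp hq => simp only [add_mul, map_add, LinearMap.add_apply, hp, hq, add_comp]
  | monomial n a ih =>
    rw [show C a * X ^ (n + 1) * f = X * (C a * X ^ n * f) by ring, pairing_X_mul_left hc, ih]
    congr 1
    simp only [mul_comp, pow_succ, C_comp, X_pow_comp, X_comp]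
    ring

theorem pairing_mul_comp_mul_X_pow_eq_zero {P y : R[X]} {p : ℕ} (hPy : P = X ^ p * y)
    (hP : ∀ g, pairing c P (g * P) = 0) {i j : ℕ} (hi : p ≤ i) (hj : p ≤ j) :
    pairing c (y * y.comp (C z - X) * X ^ i) (X ^ j) = 0 := by
  obtain ⟨a, rfl⟩ := Nat.exists_eq_add_of_le hi
  obtain ⟨b, rfl⟩ := Nat.exists_eq_add_of_le hj
  have hσ : (C z - X : R[X]).comp (C z - X) = X := by simp [sub_comp]
  calc pairing c (y * y.comp (C z - X) * X ^ (p + a)) (X ^ (p + b))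
      = pairing c ((y.comp (C z - X) * X ^ a) * P) (X ^ (p + b)) := by rw [hPy]; ring_nf
    _ = pairing c P (((C z - X) ^ a * X ^ b) * P) := by
        rw [pairing_mul_left hc, hPy]
        congr 1
        simp only [mul_comp, comp_assoc, hσ, comp_X, X_pow_comp]
        ring
    _ = 0 := hP _

end Pairing

theorem eq_zero_of_X_pow_dvd_of_recurrence {R : Type*} [CommRing R] [IsDomain R] {E : R[X][X]}
    (hE : ¬ X ∣ E.coeff 0) {s : ℕ → R[X]} {p : ℕ} (hs : ∀ i, p ≤ i → X ^ i ∣ s i)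
    (hrec : ∀ i, p ≤ i → ∑ l ∈ E.support, E.coeff l * s (l + i) = 0) {i : ℕ} (hi : p ≤ i) :
    s i = 0 := by
  have hdvd : ∀ n i, p ≤ i → X ^ (i + n) ∣ s i := by
    intro n
    induction n with
    | zero => simpa using hs
    | succ n ih =>
      intro i hi
      have h0 : 0 ∈ E.support := mem_support_iff.2 fun h => hE (h ▸ dvd_zero X)
      have hsum := hrec i hi
      rw [← Finset.add_sum_erase _ _ h0, zero_add] at hsum
      have htail : X ^ (i + (n + 1)) ∣ ∑ l ∈ E.support.erase 0, E.coeff l * s (l + i) :=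
        Finset.dvd_sum fun l hl => dvd_mul_of_dvd_right
          ((pow_dvd_pow X (by have := Finset.ne_of_mem_erase hl; omega)).trans
            (ih (l + i) (by omega))) _
      refine prime_X.pow_dvd_of_dvd_mul_left _ hE ?_
      rw [eq_neg_of_add_eq_zero_left hsum]
      exact htail.neg_right
  by_contra h
  have := natDegree_le_of_dvd (hdvd ((s i).natDegree + 1) i hi) h
  rw [natDegree_X_pow] at this
  omega

lemma lie_mem_of_mem_span {R L : Type*} [CommRing R] [LieRing L] [LieAlgebra R L]
    {s t : Set L} {P : Submodule R L} (h : ∀ x ∈ s, ∀ y ∈ t, ⁅x, y⁆ ∈ P) {x y : L}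
    (hx : x ∈ Submodule.span R s) (hy : y ∈ Submodule.span R t) : ⁅x, y⁆ ∈ P := by
  induction hx, hy using Submodule.span_induction₂ with
  | mem_mem x y hx hy => exact h x hx y hy
  | zero_left => simp
  | zero_right => simp
  | add_left _ _ _ _ _ _ h₁ h₂ => rw [add_lie]; exact add_mem h₁ h₂
  | add_right _ _ _ _ _ _ h₁ h₂ => rw [lie_add]; exact add_mem h₁ h₂
  | smul_left _ _ _ _ _ h => rw [smul_lie]; exact P.smul_mem _ h
  | smul_right _ _ _ _ _ h => rw [lie_smul]; exact P.smul_mem _ h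

variable {K L : Type*} [Field K] [LieRing L] [LieAlgebra K L] (B : Module.Basis ℕ K L)

def tail (n : ℕ) : Submodule K L := Submodule.span K (B '' Set.Ici n)

lemma basis_mem_tail {n i : ℕ} (h : n ≤ i) : B i ∈ tail B n :=
  Submodule.subset_span ⟨i, h, rfl⟩

lemma tail_antitone : Antitone (tail B) := fun _ _ h =>
  Submodule.span_mono (Set.image_mono (Set.Ici_subset_Ici.2 h))

lemma tail_zero : tail B 0 = ⊤ := by
  simp [tail, B.span_eq]

lemma repr_eq_zero_of_mem_tail {n t : ℕ} {w : L} (hw : w ∈ tail B n) (ht : t < n) :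
    B.repr w t = 0 := by
  by_contra h
  have := B.mem_span_image.1 hw (Finsupp.mem_support_iff.2 h)
  exact absurd (Set.mem_Ici.1 this) (by omega)

lemma sub_repr_zero_smul_mem_tail_one (w : L) : w - B.repr w 0 • B 0 ∈ tail B 1 := by
  refine B.mem_span_image.2 fun t ht => ?_
  have : t ≠ 0 := by rintro rfl; simp at ht
  exact Nat.one_le_iff_ne_zero.2 this

noncomputable def toPoly : L ≃ₗ[K] K[X] := B.equiv (basisMonomials K) (Equiv.refl ℕ)

lemma toPoly_basis (i : ℕ) : toPoly B (B i) = X ^ i := by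
  simp [toPoly, X_pow_eq_monomial]

lemma coeff_toPoly (w : L) (t : ℕ) : (toPoly B w).coeff t = B.repr w t := by
  have : (lcoeff K t).comp (toPoly B).toLinearMap = (Finsupp.lapply t).comp B.repr.toLinearMap :=
    B.ext fun i => by simp [toPoly_basis, coeff_X_pow, Finsupp.single_apply, eq_comm]
  exact congr($this w)

lemma X_pow_dvd_toPoly {n : ℕ} {w : L} (hw : w ∈ tail B n) : X ^ n ∣ toPoly B w :=
  X_pow_dvd_iff.2 fun d hd => by rw [coeff_toPoly, repr_eq_zero_of_mem_tail B hw hd]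

noncomputable def ofPoly : K[X] →ₗ[K] L := (toPoly B).symm.toLinearMap ∘ₗ LinearMap.mulLeft K X

lemma toPoly_ofPoly (f : K[X]) : toPoly B (ofPoly B f) = X * f := by
  simp [ofPoly]

lemma ofPoly_monomial (i : ℕ) (a : K) : ofPoly B (monomial i a) = a • B (i + 1) := by
  apply (toPoly B).injective
  rw [toPoly_ofPoly, map_smul, toPoly_basis, X_mul_monomial, ← smul_X_eq_monomial]

lemma exists_ofPoly_eq {w : L} (hw : w ∈ tail B 1) : ∃ f, ofPoly B f = w := by
  obtain ⟨f, hf⟩ := X_pow_dvd_toPoly B hw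
  exact ⟨f, (toPoly B).injective (by rw [toPoly_ofPoly, hf, pow_one])⟩

lemma lie_eq_zero_of_mem_tail {n : ℕ} (h : ∀ i j, n ≤ i → n ≤ j → ⁅B i, B j⁆ = 0) {x y : L}
    (hx : x ∈ tail B n) (hy : y ∈ tail B n) : ⁅x, y⁆ = 0 := by
  refine (Submodule.mem_bot K).1 (lie_mem_of_mem_span ?_ hx hy)
  rintro _ ⟨i, hi, rfl⟩ _ ⟨j, hj, rfl⟩
  simp [h i j hi hj]

/-- Indices are shifted past `B 0 = a`, so that `structConst_leibniz` needs no side conditions. -/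
noncomputable def structConst (i j : ℕ) : K[X] := toPoly B ⁅B (i + 1), B (j + 1)⁆

lemma pairing_map_C_map_C (f g : K[X]) :
    pairing (structConst B) (f.map C) (g.map C) = toPoly B ⁅ofPoly B f, ofPoly B g⁆ := by
  induction f using Polynomial.induction_on' with
  | add f₁ f₂ h₁ h₂ =>
    simp only [Polynomial.map_add, map_add, LinearMap.add_apply, add_lie, h₁, h₂]
  | monomial i a =>
    induction g using Polynomial.induction_on' with
    | add g₁ g₂ h₁ h₂ => simp only [Polynomial.map_add, map_add, lie_add, h₁, h₂]
    | monomial j b =>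
      simp only [map_monomial, pairing_monomial, ofPoly_monomial, smul_lie, lie_smul, map_smul,
        structConst, smul_eq_C_mul]
      ring

lemma pairing_map_C_mul_map_C_eq_zero {f : K[X]}
    (hcomm : ∀ r, ⁅ofPoly B f, ofPoly B (X ^ r * f)⁆ = 0) (g : K[X][X]) :
    pairing (structConst B) (f.map C) (g * f.map C) = 0 := by
  induction g using Polynomial.induction_on' with
  | add g₁ g₂ h₁ h₂ => rw [add_mul, map_add, h₁, h₂, add_zero]
  | monomial r a =>
    rw [← C_mul_X_pow_eq_monomial, mul_assoc, ← smul_eq_C_mul, map_smul, ← map_X C,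
      ← Polynomial.map_pow, ← Polynomial.map_mul, pairing_map_C_map_C, hcomm, map_zero, smul_zero]

variable {B}
variable (ha : ∀ j, 1 ≤ j → ⁅B 0, B j⁆ = B (j + 1))
include ha

lemma lie_basis_zero_ofPoly (f : K[X]) : ⁅B 0, ofPoly B f⁆ = ofPoly B (X * f) := by
  induction f using Polynomial.induction_on' with
  | add f₁ f₂ h₁ h₂ => simp only [mul_add, map_add, lie_add, h₁, h₂]
  | monomial i a =>
    rw [X_mul_monomial, ofPoly_monomial, ofPoly_monomial, lie_smul, ha _ (by omega)]

lemma lie_basis_zero_mem_tail {n : ℕ} (hn : 1 ≤ n) {w : L} (hw : w ∈ tail B n) :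
    ⁅B 0, w⁆ ∈ tail B (n + 1) := by
  refine lie_mem_of_mem_span (s := {B 0}) ?_ (Submodule.mem_span_singleton_self _) hw
  rintro _ rfl _ ⟨i, hi, rfl⟩
  rw [ha i (le_trans hn hi)]
  exact basis_mem_tail B (Nat.succ_le_succ hi)

variable (he : ∀ j, 1 ≤ j →
      ⁅B j, B (j + 1)⁆ ∈ Submodule.span K {x : L | ∃ i, 2 * j + 2 ≤ i ∧ x = B i})
include he

lemma lie_basis_add_mem_tail (d : ℕ) :
    ∀ j, 1 ≤ j → ⁅B j, B (j + 1 + d)⁆ ∈ tail B (2 * j + 2 + d) := by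
  induction d using Nat.strong_induction_on with
  | _ d ih =>
    intro j hj
    rcases d with _ | d
    · refine Submodule.span_le.2 ?_ (he j hj)
      rintro _ ⟨i, hi, rfl⟩
      exact basis_mem_tail B hi
    -- `⁅e_j, e_{j+2+d}⁆ = ⁅a, ⁅e_j, e_{j+1+d}⁆⁆ - ⁅e_{j+1}, e_{j+1+d}⁆`
    have hleib := leibniz_lie (B 0) (B j) (B (j + 1 + d))
    rw [ha j hj, ha _ (by omega)] at hleib
    rw [show j + 1 + (d + 1) = j + 1 + d + 1 by omega, eq_sub_of_add_eq' hleib.symm]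
    refine sub_mem ?_ ?_
    · exact lie_basis_zero_mem_tail ha (n := 2 * j + 2 + d) (by omega) (ih d (by omega) j hj)
    · rcases d with _ | d
      · simp
      · simpa [show j + 1 + 1 + d = j + 1 + (d + 1) by omega,
          show 2 * (j + 1) + 2 + d = 2 * j + 2 + (d + 1 + 1) by omega] using
          ih d (by omega) (j + 1) (by omega)

lemma lie_basis_mem_tail (i j : ℕ) : ⁅B i, B j⁆ ∈ tail B (i + j + 1) := by
  wlog hij : i ≤ j generalizing i j
  · rw [← lie_skew, add_comm i j]
    exact neg_mem (this j i (by omega))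
  rcases Nat.eq_zero_or_pos i with rfl | hi
  · rcases Nat.eq_zero_or_pos j with rfl | hj
    · simp
    · rw [ha j hj, zero_add]
      exact basis_mem_tail B le_rfl
  obtain rfl | ⟨d, rfl⟩ : j = i ∨ ∃ d, j = i + 1 + d :=
    (eq_or_lt_of_le hij).imp Eq.symm fun h => ⟨j - i - 1, by omega⟩
  · simp
  · simpa [show 2 * i + 2 + d = i + (i + 1 + d) + 1 by omega] using
      lie_basis_add_mem_tail ha he d i hi

lemma lie_mem_tail {m n : ℕ} {x y : L} (hx : x ∈ tail B m) (hy : y ∈ tail B n) :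
    ⁅x, y⁆ ∈ tail B (m + n + 1) := by
  refine lie_mem_of_mem_span ?_ hx hy
  rintro _ ⟨i, hi, rfl⟩ _ ⟨j, hj, rfl⟩
  exact tail_antitone B (by simp only [Set.mem_Ici] at hi hj; omega) (lie_basis_mem_tail ha he i j)

lemma mem_tail_of_mem_lowerCentralSeries {n : ℕ} {w : L}
    (hw : w ∈ lowerCentralSeries K L L n) : w ∈ tail B n := by
  induction n generalizing w with
  | zero => simp [tail_zero]
  | succ n ih =>
    rw [lowerCentralSeries_succ, ← LieSubmodule.mem_toSubmodule,
      LieSubmodule.lieIdeal_oper_eq_linear_span'] at hw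
    refine Submodule.span_le.2 ?_ hw
    rintro _ ⟨x, -, y, hy, rfl⟩
    have hx : x ∈ tail B 0 := by simp [tail_zero]
    simpa only [zero_add, SetLike.mem_coe] using lie_mem_tail ha he hx (ih hy)

lemma structConst_leibniz (i j : ℕ) :
    structConst B (i + 1) j + structConst B i (j + 1) = X * structConst B i j := by
  obtain ⟨f, hf⟩ := exists_ofPoly_eq B
    (tail_antitone B (by omega) (lie_basis_mem_tail ha he (i + 1) (j + 1)))
  have hleib := leibniz_lie (B 0) (B (i + 1)) (B (j + 1))
  rw [ha _ (by omega), ha _ (by omega)] at hleib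
  simp only [structConst, ← map_add, ← hleib, ← hf, lie_basis_zero_ofPoly ha, toPoly_ofPoly]

lemma exists_mem_tail_one_ne_zero (J : LieIdeal K L) (hJ : J ≠ ⊥) :
    ∃ x ∈ J, x ∈ tail B 1 ∧ x ≠ 0 := by
  obtain ⟨x, hxJ, hx0⟩ : ∃ x ∈ J, x ≠ 0 := by
    by_contra! h
    exact hJ ((LieSubmodule.eq_bot_iff J).2 h)
  by_cases hα : B.repr x 0 = 0
  · exact ⟨x, hxJ, by simpa [hα] using sub_repr_zero_smul_mem_tail_one B x, hx0⟩
  -- otherwise the `e₂`-coordinate of `⁅x, e₁⁆ ∈ J` is the `a`-coordinate of `x`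
  have hx : x ∈ tail B 0 := by simp [tail_zero]
  have htail : ⁅x - B.repr x 0 • B 0, B 1⁆ ∈ tail B (1 + 1 + 1) :=
    lie_mem_tail ha he (sub_repr_zero_smul_mem_tail_one B x) (basis_mem_tail B le_rfl)
  have hdecomp : ⁅x, B 1⁆ = B.repr x 0 • B 2 + ⁅x - B.repr x 0 • B 0, B 1⁆ := by
    have he₂ : ⁅B 0, B 1⁆ = B 2 := ha 1 le_rfl
    rw [sub_lie, smul_lie, he₂, add_sub_cancel]
  have hmem : ⁅x, B 1⁆ ∈ tail B (0 + 1 + 1) :=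
    lie_mem_tail ha he (n := 1) hx (basis_mem_tail B le_rfl)
  refine ⟨⁅x, B 1⁆, lie_mem_left K L J _ _ hxJ, tail_antitone B (by norm_num) hmem,
    fun h0 => hα ?_⟩
  have h2 := congr(B.repr $hdecomp 2)
  rw [h0, map_add, map_smul, Finsupp.add_apply,
    repr_eq_zero_of_mem_tail B htail (by norm_num)] at h2
  simpa using h2.symm

lemma exists_ofPoly_lie_ofPoly_X_pow_mul_eq_zero [LieAlgebra.IsSolvable L] :
    ∃ f : K[X], f ≠ 0 ∧ ∀ r, ⁅ofPoly B f, ofPoly B (X ^ r * f)⁆ = 0 := by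
  let J := LieAlgebra.derivedAbelianOfIdeal (⊤ : LieIdeal K L)
  have hJ : J ≠ ⊥ := by
    rw [ne_eq, LieAlgebra.abelian_of_solvable_ideal_eq_bot_iff, LieSubmodule.eq_bot_iff]
    exact fun h => B.ne_zero 0 (h _ trivial)
  obtain ⟨_, hxJ, hx1, hx0⟩ := exists_mem_tail_one_ne_zero ha he J hJ
  obtain ⟨f, rfl⟩ := exists_ofPoly_eq B hx1
  have hiter : ∀ r, ofPoly B (X ^ r * f) ∈ J := by
    intro r
    induction r with
    | zero => simpa using hxJ
    | succ r ih =>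
      rw [pow_succ', mul_assoc, ← lie_basis_zero_ofPoly ha]
      exact J.lie_mem ih
  refine ⟨f, by rintro rfl; simp at hx0, fun r => ?_⟩
  have := (LieAlgebra.abelian_derivedAbelianOfIdeal (⊤ : LieIdeal K L)).trivial
    ⟨_, hxJ⟩ ⟨_, hiter r⟩
  simpa using congr(($this : L))

lemma exists_lie_basis_eq_zero {f : K[X]} (hf : f ≠ 0)
    (hcomm : ∀ r, ⁅ofPoly B f, ofPoly B (X ^ r * f)⁆ = 0) :
    ∃ N, ∀ i j, N ≤ i → N ≤ j → ⁅B i, B j⁆ = 0 := by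
  obtain ⟨y, hfy, hy⟩ := exists_eq_pow_rootMultiplicity_mul_and_not_dvd f hf 0
  rw [map_zero, sub_zero] at hfy hy
  set p := f.rootMultiplicity 0
  have hPy : f.map C = X ^ p * y.map C := by rw [hfy, Polynomial.map_mul]; simp
  have hE : ¬ X ∣ (y.map C * (y.map C).comp (C X - X)).coeff 0 := by
    rw [mul_coeff_zero, coeff_zero_eq_eval_zero ((y.map C).comp _), eval_comp]
    simpa [eval_map, X_dvd_iff] using hy
  have hzero : ∀ i j, p ≤ i → p ≤ j → structConst B i j = 0 := by
    intro i j hi hj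
    refine eq_zero_of_X_pow_dvd_of_recurrence hE (s := fun i => structConst B i j)
      (fun i _ => ?_) (fun i hi => ?_) hi
    · exact (pow_dvd_pow X (by omega)).trans
        (X_pow_dvd_toPoly B (lie_basis_mem_tail ha he (i + 1) (j + 1)))
    · rw [← pairing_mul_X_pow_X_pow]
      exact pairing_mul_comp_mul_X_pow_eq_zero (structConst_leibniz ha he) hPy
        (pairing_map_C_mul_map_C_eq_zero B hcomm) hi hj
  refine ⟨p + 1, fun i j hi hj => ?_⟩
  obtain ⟨i, rfl⟩ : ∃ i', i = i' + 1 := ⟨i - 1, by omega⟩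
  obtain ⟨j, rfl⟩ : ∃ j', j = j' + 1 := ⟨j - 1, by omega⟩
  exact (toPoly B).map_eq_zero_iff.1 (hzero i j (by omega) (by omega))

end Filiform

theorem filiform_solvable_lcs_abelian_general (K : Type*) [Field K]
    (L : Type*) [LieRing L] [LieAlgebra K L] (B : Module.Basis ℕ K L)
    (ha : ∀ j, 1 ≤ j → ⁅B 0, B j⁆ = B (j + 1))
    (he : ∀ j, 1 ≤ j →
      ⁅B j, B (j + 1)⁆ ∈ Submodule.span K {x : L | ∃ i, 2 * j + 2 ≤ i ∧ x = B i})
    (hsolv : LieAlgebra.IsSolvable L) :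
    ∃ k, 1 ≤ k ∧ ∀ x ∈ lowerCentralSeries K L L (k - 1),
      ∀ y ∈ lowerCentralSeries K L L (k - 1), ⁅x, y⁆ = 0 := by
  obtain ⟨f, hf, hcomm⟩ := Filiform.exists_ofPoly_lie_ofPoly_X_pow_mul_eq_zero ha he
  obtain ⟨N, hN⟩ := Filiform.exists_lie_basis_eq_zero ha he hf hcomm
  refine ⟨N + 1, by omega, fun x hx y hy => ?_⟩
  rw [Nat.add_sub_cancel] at hx hy
  exact Filiform.lie_eq_zero_of_mem_tail B hN
    (Filiform.mem_tail_of_mem_lowerCentralSeries ha he hx)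
    (Filiform.mem_tail_of_mem_lowerCentralSeries ha he hy)

/-- If `L` is a solvable infinite filiform Lie algebra (basis `B` with
`B 0 = a`, `B i = eᵢ`, `[a, eⱼ] = e_{j+1}`,
`[eⱼ, e_{j+1}] ∈ span {eᵢ : i ≥ 2j+2}`), then `L^k` is abelian for some
`k ≥ 1`.  (Mathlib's lower central series is numbered so that `L^k` is
`lowerCentralSeries K L L (k - 1)`.) -/
theorem filiform_solvable_lcs_abelian (K : Type*) [Field K] [CharZero K]
    (L : Type*) [LieRing L] [LieAlgebra K L] (B : Module.Basis ℕ K L)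
    (ha : ∀ j, 1 ≤ j → ⁅B 0, B j⁆ = B (j + 1))
    (he : ∀ j, 1 ≤ j →
      ⁅B j, B (j + 1)⁆ ∈ Submodule.span K {x : L | ∃ i, 2 * j + 2 ≤ i ∧ x = B i})
    (hsolv : LieAlgebra.IsSolvable L) :
    ∃ k, 1 ≤ k ∧ ∀ x ∈ lowerCentralSeries K L L (k - 1),
      ∀ y ∈ lowerCentralSeries K L L (k - 1), ⁅x, y⁆ = 0 :=
  filiform_solvable_lcs_abelian_general K L B ha he hsolv
end

section
/- Let L be an infinite filiform Lie algebra and suppose for n ≥ 2 that L^{n+1} is abelian. Writing [eₙ, e_{n+1}] = Σ_{i≥0} μᵢ e_{2n+2+i}, one has [eₙ, eⱼ] = Σ_{i≥0} μᵢ e_{n+j+1+i} for all j ≥ n+1. -/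
/-!
Write `x = eₙ` and `a = e₀`. Since `[x, a] = -e_{n+1}` lies in the abelian ideal
`L^{n+1}`, the Leibniz rule gives `[x, [a, eⱼ]] = [a, [x, eⱼ]]` for `j ≥ n+1`, i.e. `ad x`
commutes with `ad a` there. As `ad a` shifts every index by one, the expansion of
`[eₙ, e_{n+1}]` is transported to every `[eₙ, eⱼ]`, `j ≥ n+1`, by induction on `j`.
-/

section ShiftSequence

variable {R L : Type*} [CommRing R] [LieRing L] [LieAlgebra R L]

theorem lie_finsuppSum_of_lie_eq_succ {a : L} {e : ℕ → L} {k : ℕ}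
    (he : ∀ t, k ≤ t → ⁅a, e t⁆ = e (t + 1)) (mu : ℕ →₀ R) :
    ⁅a, mu.sum fun i c => c • e (k + i)⁆ = mu.sum fun i c => c • e (k + 1 + i) := by
  simp only [Finsupp.sum, lie_sum, lie_smul]
  refine Finset.sum_congr rfl fun i _ => ?_
  rw [he _ (Nat.le_add_right k i), Nat.add_right_comm]

theorem lie_add_eq_finsuppSum_of_lie_eq_succ {a x : L} {e : ℕ → L} {m k : ℕ}
    (he : ∀ t, m ≤ t → ⁅a, e t⁆ = e (t + 1))
    (hxa : ∀ t, m ≤ t → ⁅⁅x, a⁆, e t⁆ = 0) (hmk : m ≤ k) (mu : ℕ →₀ R)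
    (hbase : ⁅x, e m⁆ = mu.sum fun i c => c • e (k + i)) (d : ℕ) :
    ⁅x, e (m + d)⁆ = mu.sum fun i c => c • e (k + d + i) := by
  induction d with
  | zero => exact hbase
  | succ d ih =>
    have hcomm : ⁅x, ⁅a, e (m + d)⁆⁆ = ⁅a, ⁅x, e (m + d)⁆⁆ := by
      rw [leibniz_lie, hxa _ (Nat.le_add_right m d), zero_add]
    rw [← Nat.add_assoc, ← he _ (Nat.le_add_right m d), hcomm, ih,
      lie_finsuppSum_of_lie_eq_succ (fun t ht => he t (by omega)), Nat.add_assoc k d 1]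

end ShiftSequence

theorem filiform_mu_formula_general (K : Type*) [Field K]
    (L : Type*) [LieRing L] [LieAlgebra K L] (B : Module.Basis ℕ K L)
    (ha : ∀ i, 1 ≤ i → ⁅B 0, B i⁆ = B (i + 1))
    (n : ℕ) (hn : 2 ≤ n)
    (hab : ∀ i, n + 1 ≤ i → ∀ j, n + 1 ≤ j → ⁅B i, B j⁆ = 0)
    (mu : ℕ →₀ K)
    (hmu : ⁅B n, B (n + 1)⁆ = mu.sum fun i c => c • B (2 * n + 2 + i)) :
    ∀ j, n + 1 ≤ j → ⁅B n, B j⁆ = mu.sum fun i c => c • B (n + j + 1 + i) := by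
  intro j hj
  obtain ⟨d, rfl⟩ := Nat.exists_eq_add_of_le hj
  have hxa : ∀ t, n + 1 ≤ t → ⁅⁅B n, B 0⁆, B t⁆ = 0 := fun t ht => by
    rw [← lie_skew (B n) (B 0), ha n (by omega), neg_lie, hab _ le_rfl t ht, neg_zero]
  rw [lie_add_eq_finsuppSum_of_lie_eq_succ (fun t ht => ha t (by omega)) hxa (by omega) mu hmu d]
  refine Finsupp.sum_congr fun i _ => ?_
  rw [show 2 * n + 2 + d + i = n + (n + 1 + d) + 1 + i by ring]

/-- Let `L` be an infinite filiform Lie algebra (basis `B` with `B 0 = a`,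
`B i = eᵢ`, `[a, eᵢ] = e_{i+1}`, `[eᵢ, eⱼ] ∈ span {e_k : k ≥ i+j+1}`), with
`[eᵢ, eⱼ] = 0` for `i, j ≥ n+1` and `n ≥ 2`.  If
`[eₙ, e_{n+1}] = Σ_{i ≥ 0} μᵢ e_{2n+2+i}`, then
`[eₙ, eⱼ] = Σ_{i ≥ 0} μᵢ e_{n+j+1+i}` for all `j ≥ n+1`. -/
theorem filiform_mu_formula (K : Type*) [Field K] [CharZero K]
    (L : Type*) [LieRing L] [LieAlgebra K L] (B : Module.Basis ℕ K L)
    (ha : ∀ i, 1 ≤ i → ⁅B 0, B i⁆ = B (i + 1))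
    (hfil : ∀ i, 1 ≤ i → ∀ j, 1 ≤ j →
      ⁅B i, B j⁆ ∈ Submodule.span K {x : L | ∃ t, i + j + 1 ≤ t ∧ x = B t})
    (n : ℕ) (hn : 2 ≤ n)
    (hab : ∀ i, n + 1 ≤ i → ∀ j, n + 1 ≤ j → ⁅B i, B j⁆ = 0)
    (mu : ℕ →₀ K)
    (hmu : ⁅B n, B (n + 1)⁆ = mu.sum fun i c => c • B (2 * n + 2 + i)) :
    ∀ j, n + 1 ≤ j → ⁅B n, B j⁆ = mu.sum fun i c => c • B (n + j + 1 + i) :=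
  filiform_mu_formula_general K L B ha n hn hab mu hmu
end

section
/- Let L be an infinite filiform Lie algebra with L^{n+1} abelian for some n ≥ 2, and write [e_{n-1}, eₙ] = Σ_{i≥0} λᵢ e_{2n+i} and [eₙ, e_{n+1}] = Σ_{i≥0} μᵢ e_{2n+2+i}. Then for all j ≥ 0, [e_{n-1}, e_{n+j}] = Σ_{i≥0} (λᵢ − (j−1)μᵢ) e_{2n+j+i} (with the convention that the j = 0 case reads [e_{n-1}, eₙ] = Σ λᵢ e_{2n+i}). -/
/-!
Since `[a, eᵢ] = e_{i+1}`, the Jacobi identity gives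
`[e_m, e_{p+1}] = [a, [e_m, e_p]] - [e_{m+1}, e_p]`, and `ad a` shifts every basis expansion
`Σ cᵢ e_{k+i}` by one. Applied with `m = n`, and using that `[e_{n+1}, e_{n+1+j}] = 0`, this shows
`[eₙ, e_{n+1+j}] = Σ μᵢ e_{2n+2+j+i}`. Applied with `m = n - 1`, each step in `j` then subtracts one
more copy of the `μ`-series from `[e_{n-1}, e_{n+j}]`.
-/

open Finsupp

namespace FiliformLieAlgebra

variable {K L : Type*} [CommRing K] [LieRing L] [LieAlgebra K L] {B : ℕ → L}

theorem lie_linearCombination_shift {x : L} {k : ℕ} (hx : ∀ i, k ≤ i → ⁅x, B i⁆ = B (i + 1))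
    (f : ℕ →₀ K) :
    ⁅x, linearCombination K (fun i => B (k + i)) f⁆ =
      linearCombination K (fun i => B (k + 1 + i)) f := by
  have hshift : (LieModule.toEnd K L L x) ∘ (fun i => B (k + i)) = fun i => B (k + 1 + i) := by
    funext i
    rw [Function.comp_apply, LieModule.toEnd_apply_apply, hx (k + i) (by omega),
      Nat.add_right_comm]
  rw [← LieModule.toEnd_apply_apply (R := K), apply_linearCombination, hshift]

theorem lie_succ_right (ha : ∀ i, 1 ≤ i → ⁅B 0, B i⁆ = B (i + 1)) {m p : ℕ} (hm : 1 ≤ m)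
    (hp : 1 ≤ p) :
    ⁅B m, B (p + 1)⁆ = ⁅B 0, ⁅B m, B p⁆⁆ - ⁅B (m + 1), B p⁆ := by
  rw [← ha p hp, ← ha m hm, leibniz_lie, ← lie_skew (B m) (B 0), neg_lie]
  abel

variable {n : ℕ} (ha : ∀ i, 1 ≤ i → ⁅B 0, B i⁆ = B (i + 1))
include ha

theorem lie_n_add_one_add (hn : 1 ≤ n) (hab : ∀ i, n + 1 ≤ i → ∀ j, n + 1 ≤ j → ⁅B i, B j⁆ = 0)
    {mu : ℕ →₀ K} (hmu : ⁅B n, B (n + 1)⁆ = linearCombination K (fun i => B (2 * n + 2 + i)) mu)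
    (j : ℕ) :
    ⁅B n, B (n + 1 + j)⁆ = linearCombination K (fun i => B (2 * n + 2 + j + i)) mu := by
  induction j with
  | zero => exact hmu
  | succ j ih =>
    rw [← add_assoc, lie_succ_right ha hn (by omega), ih, hab (n + 1) le_rfl _ (by omega),
      sub_zero, lie_linearCombination_shift (fun i _ => ha i (by omega))]
    rfl

theorem lie_pred_n_add_one_add (hn : 2 ≤ n) {lam mu : ℕ →₀ K}
    (hlam : ⁅B (n - 1), B n⁆ = linearCombination K (fun i => B (2 * n + i)) lam)
    (hmu : ∀ j, ⁅B n, B (n + 1 + j)⁆ = linearCombination K (fun i => B (2 * n + 2 + j + i)) mu)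
    (j : ℕ) :
    ⁅B (n - 1), B (n + 1 + j)⁆ =
      linearCombination K (fun i => B (2 * n + (j + 1) + i)) (lam - (j : K) • mu) := by
  have hpred : n - 1 + 1 = n := by omega
  induction j with
  | zero =>
    rw [lie_succ_right ha (by omega) (by omega), hpred, hlam, lie_self, sub_zero,
      lie_linearCombination_shift (fun i _ => ha i (by omega))]
    simp
  | succ j ih =>
    rw [← add_assoc, lie_succ_right ha (by omega) (by omega), ih, hpred, hmu,
      lie_linearCombination_shift (fun i _ => ha i (by omega))]
    simp only [map_sub, map_smul, Nat.cast_succ]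
    rw [show 2 * n + 2 + j = 2 * n + (j + 1) + 1 by omega]
    module

end FiliformLieAlgebra

open FiliformLieAlgebra in
theorem filiform_lambda_mu_formula_general (K : Type*) [Field K]
    (L : Type*) [LieRing L] [LieAlgebra K L] (B : Module.Basis ℕ K L)
    (ha : ∀ i, 1 ≤ i → ⁅B 0, B i⁆ = B (i + 1))
    (n : ℕ) (hn : 2 ≤ n)
    (hab : ∀ i, n + 1 ≤ i → ∀ j, n + 1 ≤ j → ⁅B i, B j⁆ = 0)
    (lam mu : ℕ →₀ K)
    (hlam : ⁅B (n - 1), B n⁆ = lam.sum fun i c => c • B (2 * n + i))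
    (hmu : ⁅B n, B (n + 1)⁆ = mu.sum fun i c => c • B (2 * n + 2 + i)) :
    ∀ j : ℕ,
      ⁅B (n - 1), B (n + j)⁆ =
        (lam.sum fun i c => c • B (2 * n + j + i)) -
          ((j - 1 : ℕ) : K) • (mu.sum fun i c => c • B (2 * n + j + i)) := by
  rintro (_ | j)
  · simpa using hlam
  · have hmu' := lie_n_add_one_add ha (by omega) hab hmu
    have h := lie_pred_n_add_one_add ha hn hlam hmu' j
    rw [map_sub, map_smul, linearCombination_apply, linearCombination_apply] at h
    rw [show n + (j + 1) = n + 1 + j by omega]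
    simpa using h

/-- Let `L` be an infinite filiform Lie algebra (basis `B` with `B 0 = a`,
`B i = eᵢ`, `[a, eᵢ] = e_{i+1}`, `[eᵢ, eⱼ] ∈ span {e_k : k ≥ i+j+1}`), with
`[eᵢ, eⱼ] = 0` for `i, j ≥ n+1` and `n ≥ 2`.  Writing
`[e_{n-1}, eₙ] = Σ_{i ≥ 0} λᵢ e_{2n+i}` and
`[eₙ, e_{n+1}] = Σ_{i ≥ 0} μᵢ e_{2n+2+i}`, one has, for all `j ≥ 0`,
`[e_{n-1}, e_{n+j}] = Σ_{i ≥ 0} (λᵢ − (j−1)μᵢ) e_{2n+j+i}` (with the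
convention, realized by truncated subtraction `j - 1` in `ℕ`, that the `j = 0`
case reads `[e_{n-1}, eₙ] = Σ λᵢ e_{2n+i}`). -/
theorem filiform_lambda_mu_formula (K : Type*) [Field K] [CharZero K]
    (L : Type*) [LieRing L] [LieAlgebra K L] (B : Module.Basis ℕ K L)
    (ha : ∀ i, 1 ≤ i → ⁅B 0, B i⁆ = B (i + 1))
    (hfil : ∀ i, 1 ≤ i → ∀ j, 1 ≤ j →
      ⁅B i, B j⁆ ∈ Submodule.span K {x : L | ∃ t, i + j + 1 ≤ t ∧ x = B t})
    (n : ℕ) (hn : 2 ≤ n)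
    (hab : ∀ i, n + 1 ≤ i → ∀ j, n + 1 ≤ j → ⁅B i, B j⁆ = 0)
    (lam mu : ℕ →₀ K)
    (hlam : ⁅B (n - 1), B n⁆ = lam.sum fun i c => c • B (2 * n + i))
    (hmu : ⁅B n, B (n + 1)⁆ = mu.sum fun i c => c • B (2 * n + 2 + i)) :
    ∀ j : ℕ,
      ⁅B (n - 1), B (n + j)⁆ =
        (lam.sum fun i c => c • B (2 * n + j + i)) -
          ((j - 1 : ℕ) : K) • (mu.sum fun i c => c • B (2 * n + j + i)) :=
  filiform_lambda_mu_formula_general K L B ha n hn hab lam mu hlam hmu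
end

section
/- Let L be an infinite filiform Lie algebra over a field of characteristic zero such that L^{n+1} is abelian for some n ≥ 2. Then L^n is abelian. -/
/-!
Let `T = ad a` and identify the abelian ideal `L^{n+1} = tailSpan B (n + 1)` with `K[X]` via
`p ↦ p(T) e_{n+1}` (`adEval`). Write `⁅e_n, e_{n+1}⁆ = P(T) e_{n+1}` and
`⁅e_{n-1}, e_{n+1}⁆ = Q(T) e_{n+1}`.
Since `⁅T, ad e_n⁆ = ad e_{n+1}` and `⁅T, ad e_{n-1}⁆ = ad e_n`, and `ad e_{n+1}` kills `L^{n+1}`,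
on `L^{n+1}` the map `ad e_n` is `p ↦ pP` and `ad e_{n-1}` is `p ↦ pQ - p'P`. The Jacobi identity
for `e_{n-1}, e_n, e_{n+1}` then reads `PQ - P'P = QP`, i.e. `PP' = 0`. In characteristic zero
`P` is constant, and its constant term vanishes because `⁅e_n, e_{n+1}⁆ ∈ L^{2n+2}`. So `ad e_n`
kills `L^{n+1}`, and `L^n = K e_n + L^{n+1}` is abelian.
-/

open Polynomial LieAlgebra Submodule

section LieAlgebra

variable {K L : Type*} [CommRing K] [LieRing L] [LieAlgebra K L]

theorem lie_eq_zero_of_mem_span {s t : Set L} (h : ∀ x ∈ s, ∀ y ∈ t, ⁅x, y⁆ = 0) {x y : L}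
    (hx : x ∈ span K s) (hy : y ∈ span K t) : ⁅x, y⁆ = 0 := by
  induction hx, hy using span_induction₂ with
  | mem_mem x y hx hy => exact h x hx y hy
  | zero_left => exact zero_lie _
  | zero_right => exact lie_zero _
  | add_left _ _ _ _ _ _ h₁ h₂ => rw [add_lie, h₁, h₂, add_zero]
  | add_right _ _ _ _ _ _ h₁ h₂ => rw [lie_add, h₁, h₂, add_zero]
  | smul_left _ _ _ _ _ h => rw [smul_lie, h, smul_zero]
  | smul_right _ _ _ _ _ h => rw [lie_smul, h, smul_zero]

noncomputable def adEval (a v : L) : K[X] →ₗ[K] L :=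
  LinearMap.applyₗ v ∘ₗ (aeval (ad K L a)).toLinearMap

theorem adEval_apply (a v : L) (p : K[X]) : adEval a v p = aeval (ad K L a) p v := rfl

theorem adEval_C (a v : L) (b : K) : adEval a v (C b) = b • v := by
  simp [adEval_apply, Algebra.algebraMap_eq_smul_one]

theorem adEval_mul_X (a v : L) (p : K[X]) : adEval a v (p * X) = ⁅a, adEval a v p⁆ := by
  rw [mul_comm, adEval_apply, adEval_apply, aeval_mul, aeval_X]
  rfl

theorem adEval_adEval (a v : L) (p q : K[X]) : adEval a (adEval a v q) p = adEval a v (p * q) := by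
  simp only [adEval_apply, aeval_mul, Module.End.mul_apply]

theorem lie_lie_eq_sub (a u w : L) : ⁅u, ⁅a, w⁆⁆ = ⁅a, ⁅u, w⁆⁆ - ⁅⁅a, u⁆, w⁆ :=
  eq_sub_of_add_eq' (leibniz_lie a u w).symm

theorem lie_adEval {a u v : L} (h : ∀ p : K[X], ⁅⁅a, u⁆, adEval a v p⁆ = 0) (p : K[X]) :
    ⁅u, adEval a v p⁆ = adEval a ⁅u, v⁆ p := by
  induction p using Polynomial.induction_on with
  | C b => simp [adEval_C]
  | add p q hp hq => simp only [map_add, lie_add, hp, hq]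
  | monomial k b ih =>
    rw [pow_succ, ← mul_assoc, adEval_mul_X, adEval_mul_X, lie_lie_eq_sub, ih, h, sub_zero]

theorem lie_adEval_eq_sub_derivative {a u v : L}
    (h : ∀ p : K[X], ⁅⁅a, ⁅a, u⁆⁆, adEval a v p⁆ = 0) (p : K[X]) :
    ⁅u, adEval a v p⁆ = adEval a ⁅u, v⁆ p - adEval a ⁅⁅a, u⁆, v⁆ (derivative p) := by
  induction p using Polynomial.induction_on with
  | C b => simp [adEval_C]
  | add p q hp hq => simp only [map_add, lie_add, hp, hq]; abel
  | monomial k b ih =>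
    rw [pow_succ, ← mul_assoc, derivative_mul, derivative_X, mul_one, adEval_mul_X, adEval_mul_X,
      lie_lie_eq_sub, ih, lie_adEval h, lie_sub, map_add, adEval_mul_X]
    abel

end LieAlgebra

section TailSpan

variable {K M : Type*} [CommRing K] [AddCommGroup M] [Module K M]

def tailSpan (B : Module.Basis ℕ K M) (m : ℕ) : Submodule K M :=
  span K {x | ∃ j, m ≤ j ∧ x = B j}

variable {B : Module.Basis ℕ K M} {m m' : ℕ}

theorem tailSpan_eq_span_image (B : Module.Basis ℕ K M) (m : ℕ) :
    tailSpan B m = span K (B '' Set.Ici m) := by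
  simp only [tailSpan, Set.image, Set.mem_Ici, eq_comm]

theorem basis_mem_tailSpan {j : ℕ} (h : m ≤ j) : B j ∈ tailSpan B m :=
  subset_span ⟨j, h, rfl⟩

theorem tailSpan_anti (h : m ≤ m') : tailSpan B m' ≤ tailSpan B m :=
  span_le.2 fun _ ⟨_, hj, hx⟩ => hx ▸ basis_mem_tailSpan (h.trans hj)

theorem repr_eq_zero_of_mem_tailSpan {x : M} (hx : x ∈ tailSpan B m) {j : ℕ} (hj : j < m) :
    B.repr x j = 0 := by
  rw [tailSpan_eq_span_image, B.mem_span_image] at hx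
  by_contra h
  exact absurd (hx (Finsupp.mem_support_iff.2 h)) (by simpa using hj)

end TailSpan

section Shift

variable {K L : Type*} [CommRing K] [LieRing L] [LieAlgebra K L] {B : Module.Basis ℕ K L} {a : L}
  {m : ℕ}

theorem adEval_X_pow (hshift : ∀ i, m ≤ i → ⁅a, B i⁆ = B (i + 1)) (k : ℕ) :
    adEval a (B m) (X ^ k : K[X]) = B (m + k) := by
  induction k with
  | zero => rw [pow_zero, ← C_1, adEval_C, one_smul, add_zero]
  | succ k ih => rw [pow_succ, adEval_mul_X, ih, hshift _ (by omega), add_assoc]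

theorem adEval_monomial (hshift : ∀ i, m ≤ i → ⁅a, B i⁆ = B (i + 1)) (k : ℕ) (b : K) :
    adEval a (B m) (monomial k b) = b • B (m + k) := by
  rw [← C_mul_X_pow_eq_monomial, ← smul_eq_C_mul, map_smul, adEval_X_pow hshift]

theorem repr_adEval (hshift : ∀ i, m ≤ i → ⁅a, B i⁆ = B (i + 1)) (p : K[X]) (k : ℕ) :
    B.repr (adEval a (B m) p) (m + k) = p.coeff k := by
  induction p using Polynomial.induction_on' with
  | add p q hp hq => simp only [map_add, Finsupp.add_apply, coeff_add, hp, hq]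
  | monomial j b =>
    rw [adEval_monomial hshift, map_smul, B.repr_self, Finsupp.smul_apply, coeff_monomial,
      Finsupp.single_apply]
    simp

theorem adEval_injective (hshift : ∀ i, m ≤ i → ⁅a, B i⁆ = B (i + 1)) :
    Function.Injective (adEval a (B m) : K[X] → L) := fun p q h =>
  Polynomial.ext fun k => by rw [← repr_adEval hshift, ← repr_adEval hshift, h]

theorem range_adEval (hshift : ∀ i, m ≤ i → ⁅a, B i⁆ = B (i + 1)) :
    LinearMap.range (adEval a (B m) : K[X] →ₗ[K] L) = tailSpan B m := by
  apply le_antisymm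
  · rintro _ ⟨p, rfl⟩
    induction p using Polynomial.induction_on' with
    | add p q hp hq => rw [map_add]; exact add_mem hp hq
    | monomial j b =>
      rw [adEval_monomial hshift]
      exact smul_mem _ _ (basis_mem_tailSpan (by omega))
  · refine span_le.2 fun _ ⟨j, hj, hx⟩ => ⟨X ^ (j - m), ?_⟩
    rw [adEval_X_pow hshift, hx, Nat.add_sub_cancel' hj]

theorem adEval_mem_tailSpan (hshift : ∀ i, m ≤ i → ⁅a, B i⁆ = B (i + 1)) (p : K[X]) :
    adEval a (B m) p ∈ tailSpan B m :=
  range_adEval hshift ▸ LinearMap.mem_range_self _ p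

end Shift

section Filiform

variable {K L : Type*} [LieRing L] {n : ℕ}

theorem lie_basis_adEval [CommRing K] [LieAlgebra K L] {B : Module.Basis ℕ K L}
    (ha : ∀ i, 1 ≤ i → ⁅B 0, B i⁆ = B (i + 1)) (hn : 1 ≤ n)
    (hab : ∀ x ∈ tailSpan B (n + 1), ∀ y ∈ tailSpan B (n + 1), ⁅x, y⁆ = 0)
    (p : K[X]) : ⁅B n, adEval (B 0) (B (n + 1)) p⁆ = adEval (B 0) ⁅B n, B (n + 1)⁆ p := by
  refine lie_adEval (fun q => ?_) p
  rw [ha n hn]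
  exact hab _ (basis_mem_tailSpan le_rfl) _ (adEval_mem_tailSpan (fun i hi => ha i (by omega)) q)

theorem lie_basis_pred_adEval [CommRing K] [LieAlgebra K L] {B : Module.Basis ℕ K L}
    (ha : ∀ i, 1 ≤ i → ⁅B 0, B i⁆ = B (i + 1)) (hn : 2 ≤ n)
    (hab : ∀ x ∈ tailSpan B (n + 1), ∀ y ∈ tailSpan B (n + 1), ⁅x, y⁆ = 0) (p : K[X]) :
    ⁅B (n - 1), adEval (B 0) (B (n + 1)) p⁆ =
      adEval (B 0) ⁅B (n - 1), B (n + 1)⁆ p - adEval (B 0) ⁅B n, B (n + 1)⁆ (derivative p) := by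
  have hpred : ⁅B 0, B (n - 1)⁆ = B n := by rw [ha _ (by omega), Nat.sub_add_cancel (by omega)]
  have hkill (q : K[X]) : ⁅⁅B 0, ⁅B 0, B (n - 1)⁆⁆, adEval (B 0) (B (n + 1)) q⁆ = 0 := by
    rw [hpred, ha n (by omega)]
    exact hab _ (basis_mem_tailSpan le_rfl) _ (adEval_mem_tailSpan (fun i hi => ha i (by omega)) q)
  rw [lie_adEval_eq_sub_derivative hkill, hpred]

theorem lie_basis_basis_succ_eq_zero [Field K] [CharZero K] [LieAlgebra K L]
    {B : Module.Basis ℕ K L} (ha : ∀ i, 1 ≤ i → ⁅B 0, B i⁆ = B (i + 1))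
    (hfil : ∀ i, 1 ≤ i → ∀ j, 1 ≤ j → ⁅B i, B j⁆ ∈ tailSpan B (i + j + 1)) (hn : 2 ≤ n)
    (hab : ∀ x ∈ tailSpan B (n + 1), ∀ y ∈ tailSpan B (n + 1), ⁅x, y⁆ = 0) :
    ⁅B n, B (n + 1)⁆ = 0 := by
  have hshift : ∀ i, n + 1 ≤ i → ⁅B 0, B i⁆ = B (i + 1) := fun i hi => ha i (by omega)
  set ι : K[X] →ₗ[K] L := adEval (B 0) (B (n + 1))
  have hc : ⁅B n, B (n + 1)⁆ ∈ tailSpan B (n + 2) :=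
    tailSpan_anti (by omega) (hfil n (by omega) (n + 1) (by omega))
  obtain ⟨P, hP⟩ : ⁅B n, B (n + 1)⁆ ∈ LinearMap.range ι := by
    rw [range_adEval hshift]
    exact tailSpan_anti (by omega) hc
  obtain ⟨Q, hQ⟩ : ⁅B (n - 1), B (n + 1)⁆ ∈ LinearMap.range ι := by
    rw [range_adEval hshift]
    exact tailSpan_anti (by omega) (hfil (n - 1) (by omega) (n + 1) (by omega))
  have hjacobi : ⁅B (n - 1), ⁅B n, B (n + 1)⁆⁆ = ⁅B n, ⁅B (n - 1), B (n + 1)⁆⁆ := by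
    rw [leibniz_lie, hab _ (tailSpan_anti (by omega) (hfil (n - 1) (by omega) n (by omega))) _
      (basis_mem_tailSpan le_rfl), zero_add]
  have hPP' : P * derivative P = 0 := by
    rw [← hP, ← hQ, lie_basis_pred_adEval ha hn hab, lie_basis_adEval ha (by omega) hab, ← hP,
      ← hQ, adEval_adEval, adEval_adEval, adEval_adEval, ← map_sub] at hjacobi
    linear_combination -adEval_injective hshift hjacobi
  have hP0 : P.coeff 0 = 0 := by
    rw [← repr_adEval hshift P 0, add_zero, hP]
    exact repr_eq_zero_of_mem_tailSpan hc (by omega)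
  rcases mul_eq_zero.1 hPP' with h | h
  · rw [← hP, h, map_zero]
  · rw [← hP, eq_C_of_derivative_eq_zero h, hP0, C_0, map_zero]

end Filiform

/-- Let `L` be an infinite filiform Lie algebra over a field of characteristic
zero (basis `B` with `B 0 = a`, `B i = eᵢ`, `[a, eᵢ] = e_{i+1}`,
`[eᵢ, eⱼ] ∈ span {e_k : k ≥ i+j+1}`; here `L^m = span {eⱼ : j ≥ m}` for
`m ≥ 2`).  If `L^{n+1}` is abelian for some `n ≥ 2`, then `L^n` is abelian. -/
theorem filiform_abelian_step (K : Type*) [Field K] [CharZero K]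
    (L : Type*) [LieRing L] [LieAlgebra K L] (B : Module.Basis ℕ K L)
    (ha : ∀ i, 1 ≤ i → ⁅B 0, B i⁆ = B (i + 1))
    (hfil : ∀ i, 1 ≤ i → ∀ j, 1 ≤ j →
      ⁅B i, B j⁆ ∈ Submodule.span K {x : L | ∃ t, i + j + 1 ≤ t ∧ x = B t})
    (n : ℕ) (hn : 2 ≤ n)
    (hab : ∀ x ∈ Submodule.span K {x : L | ∃ j, n + 1 ≤ j ∧ x = B j},
           ∀ y ∈ Submodule.span K {x : L | ∃ j, n + 1 ≤ j ∧ x = B j},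
           ⁅x, y⁆ = 0) :
    ∀ x ∈ Submodule.span K {x : L | ∃ j, n ≤ j ∧ x = B j},
    ∀ y ∈ Submodule.span K {x : L | ∃ j, n ≤ j ∧ x = B j},
    ⁅x, y⁆ = 0 := by
  have hBn : ∀ y ∈ tailSpan B (n + 1), ⁅B n, y⁆ = 0 := fun y hy => by
    obtain ⟨p, rfl⟩ := (range_adEval fun i hi => ha i (by omega)).ge hy
    rw [lie_basis_adEval ha (by omega) hab, lie_basis_basis_succ_eq_zero ha hfil hn hab,
      adEval_apply, map_zero]
  intro x hx y hy
  refine lie_eq_zero_of_mem_span ?_ hx hy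
  rintro _ ⟨s, hs, rfl⟩ _ ⟨t, ht, rfl⟩
  obtain rfl | hs := hs.eq_or_lt <;> obtain rfl | ht := ht.eq_or_lt
  · exact lie_self _
  · exact hBn _ (basis_mem_tailSpan ht)
  · rw [← lie_skew, hBn _ (basis_mem_tailSpan hs), neg_zero]
  · exact hab _ (basis_mem_tailSpan hs) _ (basis_mem_tailSpan ht)
end

section
/- Suppose the structure constants (λ_{js}) of an infinite filiform Lie algebra L are zero for all but finitely many pairs (j, s). Then λ_{js} = 0 for all j > 1; equivalently, [L, L] is abelian. -/
/-!
Let `N > 1` be the largest index with `λ_N ≠ 0`. Since `ad a` is a derivation raising indices by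
one, `[eᵢ, eⱼ] = 0` for `i, j > N`, and `[e_N, eⱼ]`, `[e_{N-1}, eⱼ]` (`j > N`) can be computed in
closed form. The Jacobi identity for `e_{N-1}, e_N, e_{N+1}` then collapses to
`Σ_{s,t} (N + s) λ_{Ns} λ_{Nt} e_{3N+s+t} = 0`, whose top coefficient `(N + S) λ_{NS}²` is nonzero
in characteristic zero. Hence `λ_j = 0` for `j > 1`; then the `eⱼ`, `j ≥ 2`, commute pairwise and
span a subspace containing `[L, L]`.
-/

section

variable {K L : Type*} [CommRing K] [LieRing L] [LieAlgebra K L]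

theorem lie_mem_of_mem_span {s t : Set L} {V : Submodule K L}
    (h : ∀ x ∈ s, ∀ y ∈ t, ⁅x, y⁆ ∈ V) {x y : L} (hx : x ∈ Submodule.span K s)
    (hy : y ∈ Submodule.span K t) : ⁅x, y⁆ ∈ V := by
  have : Submodule.map₂ (LieModule.toEnd K L L : L →ₗ[K] Module.End K L)
      (Submodule.span K s) (Submodule.span K t) ≤ V := by
    rw [Submodule.map₂_span_span, Submodule.span_le]
    rintro _ ⟨x, hx, y, hy, rfl⟩
    exact h x hx y hy
  exact Submodule.map₂_le.mp this x hx y hy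

theorem mem_of_mem_derivedSeries_one {ι : Type*} (B : Module.Basis ι K L)
    {V : Submodule K L} (h : ∀ i j, ⁅B i, B j⁆ ∈ V) {z : L}
    (hz : z ∈ LieAlgebra.derivedSeries K L 1) : z ∈ V := by
  rw [LieAlgebra.derivedSeries_def, LieAlgebra.derivedSeriesOfIdeal_succ,
    LieAlgebra.derivedSeriesOfIdeal_zero, ← LieSubmodule.mem_toSubmodule,
    LieSubmodule.lieIdeal_oper_eq_linear_span'] at hz
  refine Submodule.span_le.mpr ?_ hz
  rintro _ ⟨x, -, y, -, rfl⟩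
  refine lie_mem_of_mem_span ?_ (B.mem_span x) (B.mem_span y)
  rintro _ ⟨i, rfl⟩ _ ⟨j, rfl⟩
  exact h i j

theorem Finsupp.exists_forall_lt_eq_zero_of_finite {α M : Type*} [Zero M] {f : ℕ → α →₀ M}
    (hf : {p : ℕ × α | f p.1 p.2 ≠ 0}.Finite) : ∃ N, ∀ j, N < j → f j = 0 := by
  obtain ⟨N, hN⟩ := (hf.image Prod.fst).bddAbove
  refine ⟨N, fun j hj => Finsupp.ext fun s => by_contra fun hs => ?_⟩
  exact absurd (hN ⟨(j, s), hs, rfl⟩) (by omega)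

namespace Filiform

def series (e : ℕ → L) (f : ℕ →₀ K) (k : ℕ) : L := f.sum fun s c => c • e (k + s)

theorem series_eq_linearCombination (e : ℕ → L) (f : ℕ →₀ K) (k : ℕ) :
    series e f k = Finsupp.linearCombination K e (f.mapDomain (k + ·)) := by
  rw [Finsupp.linearCombination_mapDomain, Finsupp.linearCombination_apply]
  rfl

@[simp]
theorem series_zero (e : ℕ → L) (k : ℕ) : series e (0 : ℕ →₀ K) k = 0 := by
  simp [series]

theorem lie_series (x : L) (e : ℕ → L) (f : ℕ →₀ K) (k : ℕ) :
    ⁅x, series e f k⁆ = f.sum fun s c => c • ⁅x, e (k + s)⁆ := by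
  simp only [series, ← LieAlgebra.ad_apply K, map_finsuppSum, map_smul]

theorem series_lie (y : L) (e : ℕ → L) (f : ℕ →₀ K) (k : ℕ) :
    ⁅series e f k, y⁆ = f.sum fun s c => c • ⁅e (k + s), y⁆ := by
  rw [← lie_skew, lie_series, ← Finsupp.sum_neg]
  simp only [← smul_neg, lie_skew]

theorem lie_series_of_shift {a : L} {e : ℕ → L} (ha : ∀ j, 1 ≤ j → ⁅a, e j⁆ = e (j + 1))
    (f : ℕ →₀ K) {k : ℕ} (hk : 1 ≤ k) : ⁅a, series e f k⁆ = series e f (k + 1) := by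
  rw [lie_series]
  refine Finsupp.sum_congr fun s _ => ?_
  rw [ha _ (by omega), add_right_comm]

theorem sum_smul_series_comm (e : ℕ → L) (f g : ℕ →₀ K) (k : ℕ) :
    (f.sum fun s c => c • series e g (k + s)) = g.sum fun t c => c • series e f (k + t) := by
  simp only [series, Finsupp.smul_sum, smul_smul]
  rw [Finsupp.sum_comm]
  refine Finsupp.sum_congr fun t _ => Finsupp.sum_congr fun s _ => ?_
  rw [mul_comm, add_right_comm]

theorem repr_series_add (B : Module.Basis ℕ K L) (f : ℕ →₀ K) (k i : ℕ) :
    B.repr (series B f k) (k + i) = f i := by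
  rw [series_eq_linearCombination, B.repr_linearCombination,
    Finsupp.mapDomain_apply (add_right_injective k)]

theorem sum_smul_series_ne_zero [IsDomain K] (B : Module.Basis ℕ K L) {w : ℕ → K}
    (hw : ∀ s, w s ≠ 0) {g : ℕ →₀ K} (hg : g ≠ 0) (k : ℕ) :
    (g.sum fun s c => (w s * c) • series B g (k + s)) ≠ 0 := by
  have hne : g.support.Nonempty := Finsupp.support_nonempty_iff.mpr hg
  set S := g.support.max' hne
  have hS : S ∈ g.support := g.support.max'_mem hne
  have hgS : g S ≠ 0 := Finsupp.mem_support_iff.mp hS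
  -- the coefficient of `B (k + 2 S)` only receives the product of the two leading terms
  intro h
  have key := congrArg (fun x => B.repr x (k + S + S)) h
  simp only [map_finsuppSum, map_smul, Finsupp.sum_apply, Finsupp.smul_apply, smul_eq_mul,
    map_zero, Finsupp.coe_zero, Pi.zero_apply] at key
  rw [Finsupp.sum, Finset.sum_eq_single_of_mem S hS, repr_series_add] at key
  · exact mul_ne_zero (mul_ne_zero (hw S) hgS) hgS key
  intro s hs hsS
  have hsS' : s < S := lt_of_le_of_ne (g.support.le_max' s hs) hsS
  have hout : S + S - s ∉ g.support := fun hmem => by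
    have := g.support.le_max' _ hmem
    omega
  rw [show k + S + S = k + s + (S + S - s) by omega, repr_series_add,
    Finsupp.notMem_support_iff.mp hout, mul_zero]

theorem series_mem {e : ℕ → L} {V : Submodule K L} (f : ℕ →₀ K) {k : ℕ}
    (he : ∀ s, e (k + s) ∈ V) : series e f k ∈ V :=
  Submodule.sum_mem _ fun s _ => Submodule.smul_mem _ _ (he s)

theorem lie_succ_right {a : L} {e : ℕ → L} (ha : ∀ j, 1 ≤ j → ⁅a, e j⁆ = e (j + 1)) {i j : ℕ}
    (hi : 1 ≤ i) (hj : 1 ≤ j) : ⁅e i, e (j + 1)⁆ = ⁅a, ⁅e i, e j⁆⁆ - ⁅e (i + 1), e j⁆ := by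
  rw [leibniz_lie a (e i) (e j), ha i hi, ha j hj]
  abel

theorem lie_eq_zero_of_lie_succ_eq_zero {a : L} {e : ℕ → L}
    (ha : ∀ j, 1 ≤ j → ⁅a, e j⁆ = e (j + 1)) {N : ℕ} (h : ∀ j, N < j → ⁅e j, e (j + 1)⁆ = 0)
    {i j : ℕ} (hi : N < i) (hj : N < j) : ⁅e i, e j⁆ = 0 := by
  have key : ∀ d i, N < i → ⁅e i, e (i + d)⁆ = 0 := by
    intro d
    induction d using Nat.twoStepInduction with
    | zero => exact fun i _ => lie_self _
    | one => exact h
    | more d ih ih' =>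
      intro i hi
      rw [← add_assoc, lie_succ_right ha (by omega) (by omega), add_assoc, ih' i hi,
        show i + (d + 1) = i + 1 + d by omega, ih (i + 1) (by omega), lie_zero, sub_zero]
  rcases le_total i j with hij | hij
  · obtain ⟨d, rfl⟩ := Nat.exists_eq_add_of_le hij
    exact key d i hi
  · obtain ⟨d, rfl⟩ := Nat.exists_eq_add_of_le hij
    rw [← lie_skew, key d j hj, neg_zero]

structure IsFiliform (a : L) (e : ℕ → L) (lam : ℕ → ℕ →₀ K) : Prop where
  lie_shift : ∀ j, 1 ≤ j → ⁅a, e j⁆ = e (j + 1)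
  lie_succ : ∀ j, 1 ≤ j → ⁅e j, e (j + 1)⁆ = series e (lam j) (2 * j + 1)

namespace IsFiliform

variable {a : L} {e : ℕ → L} {lam : ℕ → ℕ →₀ K}

theorem lie_eq_zero_of_lam_eq_zero (hF : IsFiliform a e lam) {N : ℕ}
    (htop : ∀ j, N < j → lam j = 0) {i j : ℕ} (hi : N < i) (hj : N < j) : ⁅e i, e j⁆ = 0 :=
  lie_eq_zero_of_lie_succ_eq_zero hF.lie_shift
    (fun j hj => by rw [hF.lie_succ j (by omega), htop j hj, series_zero]) hi hj

theorem lie_top_eq_series (hF : IsFiliform a e lam) {n : ℕ}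
    (htop : ∀ j, n + 1 < j → lam j = 0) (d : ℕ) :
    ⁅e (n + 1), e (n + 2 + d)⁆ = series e (lam (n + 1)) (2 * n + 3 + d) := by
  induction d with
  | zero => exact hF.lie_succ (n + 1) (by omega)
  | succ d ih =>
    rw [← add_assoc, lie_succ_right hF.lie_shift (by omega) (by omega), ih,
      lie_series_of_shift hF.lie_shift _ (by omega),
      hF.lie_eq_zero_of_lam_eq_zero htop (by omega) (by omega), sub_zero]
    rfl

theorem lie_pred_top_eq_series (hF : IsFiliform a e lam) {n : ℕ} (hn : 1 ≤ n)
    (htop : ∀ j, n + 1 < j → lam j = 0) (d : ℕ) :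
    ⁅e n, e (n + 2 + d)⁆ =
      series e (lam n) (2 * n + 2 + d) - (d : K) • series e (lam (n + 1)) (2 * n + 2 + d) := by
  induction d with
  | zero =>
    rw [lie_succ_right hF.lie_shift hn (by omega), hF.lie_succ n hn,
      lie_series_of_shift hF.lie_shift _ (by omega), lie_self, sub_zero, Nat.cast_zero,
      zero_smul, sub_zero]
  | succ d ih =>
    rw [← add_assoc, lie_succ_right hF.lie_shift hn (by omega), ih, lie_sub, lie_smul,
      lie_series_of_shift hF.lie_shift _ (by omega),
      lie_series_of_shift hF.lie_shift _ (by omega),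
      hF.lie_top_eq_series htop d, Nat.cast_succ, add_smul, one_smul,
      show 2 * n + 3 + d = 2 * n + 2 + d + 1 by omega]
    abel

theorem lam_succ_eq_zero [IsDomain K] [CharZero K] {B : Module.Basis ℕ K L}
    (hF : IsFiliform a B lam) {n : ℕ} (hn : 1 ≤ n) (htop : ∀ j, n + 1 < j → lam j = 0) :
    lam (n + 1) = 0 := by
  set g := lam (n + 1)
  set h := lam n
  have lhs : ⁅B n, ⁅B (n + 1), B (n + 2)⁆⁆ =
      (g.sum fun s c => c • series B h (3 * n + 3 + s)) -
        g.sum fun s c => (((n + 1 + s : ℕ) : K) * c) • series B g (3 * n + 3 + s) := by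
    rw [hF.lie_top_eq_series htop 0, lie_series, ← Finsupp.sum_sub]
    refine Finsupp.sum_congr fun s _ => ?_
    rw [show 2 * n + 3 + 0 + s = n + 2 + (n + 1 + s) by omega, hF.lie_pred_top_eq_series hn htop,
      show 2 * n + 2 + (n + 1 + s) = 3 * n + 3 + s by omega, smul_sub, smul_smul,
      mul_comm (g s)]
  have mid : ⁅⁅B n, B (n + 1)⁆, B (n + 2)⁆ = 0 := by
    rw [hF.lie_succ n hn, series_lie]
    exact Finset.sum_eq_zero fun t _ =>
      smul_eq_zero_of_right _ (hF.lie_eq_zero_of_lam_eq_zero htop (by omega) (by omega))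
  have rhs : ⁅B (n + 1), ⁅B n, B (n + 2)⁆⁆ = h.sum fun t c => c • series B g (3 * n + 3 + t) := by
    have := hF.lie_pred_top_eq_series hn htop 0
    rw [Nat.cast_zero, zero_smul, sub_zero] at this
    rw [this, lie_series]
    refine Finsupp.sum_congr fun t _ => ?_
    rw [show 2 * n + 2 + 0 + t = n + 2 + (n + t) by omega, hF.lie_top_eq_series htop,
      show 2 * n + 3 + (n + t) = 3 * n + 3 + t by omega]
  have jacobi := leibniz_lie (B n) (B (n + 1)) (B (n + 2))
  rw [lhs, mid, rhs, zero_add, sum_smul_series_comm, sub_eq_self] at jacobi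
  by_contra hg
  exact sum_smul_series_ne_zero B (fun s => Nat.cast_ne_zero.mpr (by omega)) hg _ jacobi

theorem lam_eq_zero_of_finite [IsDomain K] [CharZero K] {B : Module.Basis ℕ K L}
    (hF : IsFiliform a B lam) (hfin : {p : ℕ × ℕ | lam p.1 p.2 ≠ 0}.Finite) :
    ∀ j, 1 < j → lam j = 0 := by
  suffices descend : ∀ k, (∀ j, 1 + k < j → lam j = 0) → ∀ j, 1 < j → lam j = 0 by
    obtain ⟨N, hN⟩ := Finsupp.exists_forall_lt_eq_zero_of_finite hfin
    exact descend N fun j hj => hN j (by omega)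
  intro k
  induction k with
  | zero => exact id
  | succ k ih =>
    intro htop
    refine ih fun j hj => ?_
    obtain rfl | hj := eq_or_lt_of_le (Nat.succ_le_of_lt hj)
    · exact hF.lam_succ_eq_zero (by omega) htop
    · exact htop j (by omega)

theorem lie_mem_span_of_lam_eq_zero {B : Module.Basis ℕ K L} (hF : IsFiliform (B 0) B lam)
    (hlam : ∀ j, 1 < j → lam j = 0) (i j : ℕ) :
    ⁅B i, B j⁆ ∈ Submodule.span K (B '' Set.Ici 2) := by
  set V := Submodule.span K (B '' Set.Ici 2)
  have mem : ∀ j, 2 ≤ j → B j ∈ V := fun j hj => Submodule.subset_span ⟨j, hj, rfl⟩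
  have lie_mem : ∀ v ∈ V, ⁅B 0, v⁆ ∈ V := fun v hv => by
    refine lie_mem_of_mem_span ?_ (Submodule.mem_span_singleton_self (B 0)) hv
    rintro _ rfl _ ⟨j, hj : 2 ≤ j, rfl⟩
    rw [hF.lie_shift j (by omega)]
    exact mem _ (by omega)
  have lie_one : ∀ j, 2 ≤ j → ⁅B 1, B j⁆ ∈ V := by
    refine Nat.le_induction ?_ fun j hj ih => ?_
    · rw [hF.lie_succ 1 le_rfl]
      exact series_mem _ fun s => mem _ (by omega)
    · rw [lie_succ_right hF.lie_shift le_rfl (by omega),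
        hF.lie_eq_zero_of_lam_eq_zero hlam (i := 1 + 1) (by omega) (by omega), sub_zero]
      exact lie_mem _ ih
  wlog hij : i ≤ j generalizing i j
  · rw [← lie_skew]
    exact V.neg_mem (this j i (by omega))
  rcases i with _ | _ | i
  · rcases j with _ | j
    · rw [lie_self]
      exact V.zero_mem
    · rw [hF.lie_shift _ (by omega)]
      exact mem _ (by omega)
  · rcases j with _ | _ | j
    · omega
    · rw [lie_self]
      exact V.zero_mem
    · exact lie_one _ (by omega)
  · rw [hF.lie_eq_zero_of_lam_eq_zero hlam (by omega) (by omega)]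
    exact V.zero_mem

theorem lie_eq_zero_of_mem_span (hF : IsFiliform a e lam) (hlam : ∀ j, 1 < j → lam j = 0)
    {x y : L} (hx : x ∈ Submodule.span K (e '' Set.Ici 2))
    (hy : y ∈ Submodule.span K (e '' Set.Ici 2)) : ⁅x, y⁆ = 0 := by
  refine (Submodule.mem_bot K).mp (lie_mem_of_mem_span ?_ hx hy)
  rintro _ ⟨i, hi, rfl⟩ _ ⟨j, hj, rfl⟩
  rw [hF.lie_eq_zero_of_lam_eq_zero hlam hi hj]
  exact Submodule.zero_mem _

end IsFiliform

end Filiform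

end

theorem filiform_finitely_many_constants_general (K : Type*) [Field K] [CharZero K]
    (L : Type*) [LieRing L] [LieAlgebra K L] (B : Module.Basis ℕ K L)
    (lam : ℕ → (ℕ →₀ K))
    (hfin : {p : ℕ × ℕ | lam p.1 p.2 ≠ 0}.Finite)
    (ha : ∀ j, 1 ≤ j → ⁅B 0, B j⁆ = B (j + 1))
    (he : ∀ j, 1 ≤ j → ⁅B j, B (j + 1)⁆ = (lam j).sum fun s c => c • B (2 * j + 1 + s)) :
    (∀ j, 1 < j → lam j = 0) ∧
    (∀ x ∈ LieAlgebra.derivedSeries K L 1, ∀ y ∈ LieAlgebra.derivedSeries K L 1,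
      ⁅x, y⁆ = 0) := by
  have hF : Filiform.IsFiliform (B 0) B lam := ⟨ha, he⟩
  have hlam := hF.lam_eq_zero_of_finite hfin
  have hV := hF.lie_mem_span_of_lam_eq_zero hlam
  exact ⟨hlam, fun x hx y hy => hF.lie_eq_zero_of_mem_span hlam
    (mem_of_mem_derivedSeries_one B hV hx) (mem_of_mem_derivedSeries_one B hV hy)⟩

/-- Suppose the structure constants `(λ_{js})` of an infinite filiform Lie
algebra `L` (basis `B` with `B 0 = a`, `B j = eⱼ`, `[a, eⱼ] = e_{j+1}`,
`[eⱼ, e_{j+1}] = Σ_{s ≥ 1} λ_{js} e_{2j+1+s}`) are zero for all but finitely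
many pairs `(j, s)`.  Then `λ_{js} = 0` for all `j > 1`; equivalently,
`[L, L] = span {e₂, e₃, ...}` is abelian. -/
theorem filiform_finitely_many_constants (K : Type*) [Field K] [CharZero K]
    (L : Type*) [LieRing L] [LieAlgebra K L] (B : Module.Basis ℕ K L)
    (lam : ℕ → (ℕ →₀ K)) (hlam0 : ∀ j, lam j 0 = 0)
    (hfin : {p : ℕ × ℕ | lam p.1 p.2 ≠ 0}.Finite)
    (ha : ∀ j, 1 ≤ j → ⁅B 0, B j⁆ = B (j + 1))
    (he : ∀ j, 1 ≤ j → ⁅B j, B (j + 1)⁆ = (lam j).sum fun s c => c • B (2 * j + 1 + s)) :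
    (∀ j, 1 < j → lam j = 0) ∧
    (∀ x ∈ LieAlgebra.derivedSeries K L 1, ∀ y ∈ LieAlgebra.derivedSeries K L 1,
      ⁅x, y⁆ = 0) :=
  filiform_finitely_many_constants_general K L B lam hfin ha he
end

section
/- Let L be an infinite filiform Lie algebra such that [L, L] is abelian. Then L is isomorphic to L_{(λ)} for some sequence (λ) = (λ_s)_{s≥1}; specifically, writing [e₁, e₂] = Σ_{s≥1} λ_s e_{3+s}, one has [e₁, eᵢ] = Σ_{s≥1} λ_s e_{1+i+s} for all i ≥ 2 and [eᵢ, eⱼ] = 0 for i, j ≥ 2. -/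
/-!
Since `eᵢ₊₁ = [a, eᵢ]`, every `eᵢ` with `i ≥ 2` lies in `[L, L]`, so abelianness of `[L, L]`
gives `[eᵢ, eⱼ] = 0` for `i, j ≥ 2`. The Jacobi identity for `a, e₁, eᵢ` then reads
`[e₁, eᵢ₊₁] = [a, [e₁, eᵢ]] - [e₂, eᵢ] = [a, [e₁, eᵢ]]`, and `ad a` shifts every `eₖ` with `k ≥ 1`
one step up; so the expansion of `[e₁, e₂]`, which by filiformity only involves `eₖ` with
`k ≥ 4`, propagates by shifting to all `[e₁, eᵢ]`.
-/

open LieAlgebra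

lemma LieAlgebra.lie_mem_derivedSeries_one (R : Type*) {L : Type*} [CommRing R] [LieRing L]
    [LieAlgebra R L] (x y : L) : ⁅x, y⁆ ∈ derivedSeries R L 1 := by
  have h : ⁅x, y⁆ ∈ Submodule.span R {⁅u, v⁆ | (u : L) (v : L)} :=
    Submodule.subset_span ⟨x, y, rfl⟩
  rwa [← coe_derivedSeries_one_eq] at h

section ShiftedExpansion

variable {K L : Type*} [CommRing K] [AddCommGroup L] [Module K L] (B : Module.Basis ℕ K L)

lemma Module.Basis.exists_sum_shift_of_mem_span {n : ℕ} {x : L}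
    (hx : x ∈ Submodule.span K {y : L | ∃ t, n + 1 ≤ t ∧ y = B t}) :
    ∃ lam : ℕ →₀ K, lam 0 = 0 ∧ x = lam.sum fun s c => c • B (n + s) := by
  have hset : {y : L | ∃ t, n + 1 ≤ t ∧ y = B t} = B '' Set.Ici (n + 1) := by
    ext y
    simp only [Set.mem_ofPred_eq, Set.mem_image, Set.mem_Ici, eq_comm (a := y)]
  rw [hset, B.mem_span_image] at hx
  have hbij : Set.BijOn (n + ·) ((n + ·) ⁻¹' ↑(B.repr x).support) ↑(B.repr x).support :=
    ⟨fun _ hs => hs, (add_right_injective n).injOn, fun t ht =>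
      have hnt : n + (t - n) = t := Nat.add_sub_of_le (Nat.le_of_succ_le (hx ht))
      ⟨t - n, by simpa [hnt] using ht, hnt⟩⟩
  refine ⟨Finsupp.comapDomain (n + ·) (B.repr x) hbij.injOn, ?_, ?_⟩
  · rw [Finsupp.comapDomain_apply, add_zero, ← Finsupp.notMem_support_iff]
    exact fun hn => (Nat.lt_irrefl n) (hx hn)
  · conv_lhs => rw [← B.linearCombination_repr x, Finsupp.linearCombination_apply]
    exact (Finsupp.sum_comapDomain (n + ·) (B.repr x) (fun t c => c • B t) hbij).symm

end ShiftedExpansion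

section FiliformShift

variable {K L : Type*} [CommRing K] [LieRing L] [LieAlgebra K L] (B : Module.Basis ℕ K L)

lemma lie_basis_zero_finsupp_sum_shift (ha : ∀ i, 1 ≤ i → ⁅B 0, B i⁆ = B (i + 1))
    {m : ℕ} (hm : 1 ≤ m) (lam : ℕ →₀ K) :
    ⁅B 0, lam.sum fun s c => c • B (m + s)⁆ = lam.sum fun s c => c • B (m + 1 + s) := by
  rw [← LieAlgebra.ad_apply (R := K), map_finsuppSum]
  refine Finsupp.sum_congr fun s _ => ?_
  rw [map_smul, LieAlgebra.ad_apply, ha (m + s) (by omega), add_right_comm]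

lemma lie_basis_one_succ_eq_lie_basis_zero_lie {n : ℕ} (h1 : ⁅B 0, B 1⁆ = B 2)
    (hn : ⁅B 0, B n⁆ = B (n + 1)) (h2n : ⁅B 2, B n⁆ = 0) :
    ⁅B 1, B (n + 1)⁆ = ⁅B 0, ⁅B 1, B n⁆⁆ := by
  rw [leibniz_lie, h1, hn, h2n, zero_add]

end FiliformShift

theorem filiform_metabelian_is_Llam_general (K : Type*) [Field K]
    (L : Type*) [LieRing L] [LieAlgebra K L] (B : Module.Basis ℕ K L)
    (ha : ∀ i, 1 ≤ i → ⁅B 0, B i⁆ = B (i + 1))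
    (hfil : ∀ i, 1 ≤ i → ∀ j, 1 ≤ j →
      ⁅B i, B j⁆ ∈ Submodule.span K {x : L | ∃ t, i + j + 1 ≤ t ∧ x = B t})
    (hab : ∀ x ∈ LieAlgebra.derivedSeries K L 1,
           ∀ y ∈ LieAlgebra.derivedSeries K L 1, ⁅x, y⁆ = 0) :
    ∃ lam : ℕ →₀ K, lam 0 = 0 ∧
      ⁅B 1, B 2⁆ = (lam.sum fun s c => c • B (3 + s)) ∧
      (∀ i, 2 ≤ i → ⁅B 1, B i⁆ = lam.sum fun s c => c • B (1 + i + s)) ∧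
      (∀ i, 2 ≤ i → ∀ j, 2 ≤ j → ⁅B i, B j⁆ = 0) := by
  have hmem : ∀ i, 2 ≤ i → B i ∈ derivedSeries K L 1 := fun i hi => by
    obtain ⟨j, rfl⟩ : ∃ j, i = j + 1 := ⟨i - 1, by omega⟩
    exact ha j (by omega) ▸ lie_mem_derivedSeries_one K (B 0) (B j)
  have hzero : ∀ i, 2 ≤ i → ∀ j, 2 ≤ j → ⁅B i, B j⁆ = 0 := fun i hi j hj =>
    hab _ (hmem i hi) _ (hmem j hj)
  obtain ⟨lam, hlam0, hbase⟩ :=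
    B.exists_sum_shift_of_mem_span (n := 3) (hfil 1 le_rfl 2 one_le_two)
  refine ⟨lam, hlam0, hbase, fun i hi => ?_, hzero⟩
  induction i, hi using Nat.le_induction with
  | base => exact hbase
  | succ n hn ih =>
    rw [lie_basis_one_succ_eq_lie_basis_zero_lie B (ha 1 le_rfl) (ha n (by omega))
      (hzero 2 le_rfl n hn), ih,
      lie_basis_zero_finsupp_sum_shift B ha (by omega)]
    simp only [add_assoc]

/-- Let `L` be an infinite filiform Lie algebra (basis `B` with `B 0 = a`,
`B i = eᵢ`, `[a, eᵢ] = e_{i+1}`, `[eᵢ, eⱼ] ∈ span {e_k : k ≥ i+j+1}`) such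
that `[L, L]` is abelian.  Then `L` is of the form `L_(λ)`: writing
`[e₁, e₂] = Σ_{s ≥ 1} λ_s e_{3+s}`, one has
`[e₁, eᵢ] = Σ_{s ≥ 1} λ_s e_{1+i+s}` for all `i ≥ 2`, and `[eᵢ, eⱼ] = 0` for
`i, j ≥ 2`. -/
theorem filiform_metabelian_is_Llam (K : Type*) [Field K] [CharZero K]
    (L : Type*) [LieRing L] [LieAlgebra K L] (B : Module.Basis ℕ K L)
    (ha : ∀ i, 1 ≤ i → ⁅B 0, B i⁆ = B (i + 1))
    (hfil : ∀ i, 1 ≤ i → ∀ j, 1 ≤ j →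
      ⁅B i, B j⁆ ∈ Submodule.span K {x : L | ∃ t, i + j + 1 ≤ t ∧ x = B t})
    (hab : ∀ x ∈ LieAlgebra.derivedSeries K L 1,
           ∀ y ∈ LieAlgebra.derivedSeries K L 1, ⁅x, y⁆ = 0) :
    ∃ lam : ℕ →₀ K, lam 0 = 0 ∧
      ⁅B 1, B 2⁆ = (lam.sum fun s c => c • B (3 + s)) ∧
      (∀ i, 2 ≤ i → ⁅B 1, B i⁆ = lam.sum fun s c => c • B (1 + i + s)) ∧
      (∀ i, 2 ≤ i → ∀ j, 2 ≤ j → ⁅B i, B j⁆ = 0) :=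
  filiform_metabelian_is_Llam_general K L B ha hfil hab
end

section
/- Let φ be the linear map of L_{(λ)} determined by φ(a) = a, φ(e₁) = e₁ + d·e_k for some scalar d and k ≥ 2, and extended by φ(e_{i+1}) = [φ(a), φ(eᵢ)]. Then φ(eᵢ) = eᵢ + d·e_{k+i-1} for all i ≥ 1, and [φ(e₁), φ(e₂)] = Σ_{i≥1} λᵢ φ(e_{3+i}); hence the change of basis by φ does not alter the structure sequence (λ). -/
/-!
Since `φ` fixes `a`, applying `ad a` repeatedly carries the shift `e₁ ↦ e₁ + d e_k` along the
chain `eᵢ = (ad a)^(i-1) e₁`. In `[φ e₁, φ e₂]` the terms `[e_k, e₂]` and `[e_k, e_{k+1}]` vanish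
because `k ≥ 2`, and the remaining term `d [e₁, e_{k+1}]` is exactly the shifted part of
`Σ λⱼ φ(e_{3+j})`.
-/

section

variable {R L : Type*} [CommRing R] [LieRing L] [LieAlgebra R L]

theorem eq_add_smul_shift_of_lie_succ {a : L} {e u : ℕ → L} {d : R} {k : ℕ} (hk : 1 ≤ k)
    (ha : ∀ i, 1 ≤ i → ⁅a, e i⁆ = e (i + 1)) (hu1 : u 1 = e 1 + d • e k)
    (hu : ∀ i, 1 ≤ i → u (i + 1) = ⁅a, u i⁆) :
    ∀ i, 1 ≤ i → u i = e i + d • e (k + i - 1) := by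
  intro i hi
  induction i, hi using Nat.le_induction with
  | base => simpa using hu1
  | succ n hn ih =>
    rw [hu n hn, ih, lie_add, lie_smul, ha n hn, ha _ (by omega),
      show k + n - 1 + 1 = k + (n + 1) - 1 by omega]

theorem lie_eq_sum_of_eq_add_smul_shift {e u : ℕ → L} {lam : ℕ →₀ R} {d : R} {k : ℕ}
    (hk : 2 ≤ k) (h1 : ∀ i, 2 ≤ i → ⁅e 1, e i⁆ = lam.sum fun j c => c • e (1 + i + j))
    (h2 : ∀ i, 2 ≤ i → ∀ j, 2 ≤ j → ⁅e i, e j⁆ = 0)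
    (hu : ∀ i, 1 ≤ i → u i = e i + d • e (k + i - 1)) :
    ⁅u 1, u 2⁆ = lam.sum fun j c => c • u (3 + j) := by
  have hu1 : u 1 = e 1 + d • e k := hu 1 le_rfl
  have hu2 : u 2 = e 2 + d • e (k + 1) := hu 2 (by norm_num)
  -- indices in the shape produced by `h1 2` and `h1 (k + 1)`, so that `simp` can match terms
  have hu3 (j : ℕ) : u (3 + j) = e (1 + 2 + j) + d • e (1 + (k + 1) + j) := by
    rw [hu _ (by omega)]; congr 3; omega
  rw [hu1, hu2, add_lie, lie_add, lie_add, smul_lie, lie_smul, lie_smul, smul_lie,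
    h1 2 le_rfl, h1 (k + 1) (by omega), h2 k hk 2 le_rfl, h2 k hk (k + 1) (by omega)]
  simp only [hu3, smul_zero, add_zero, smul_add, Finsupp.smul_sum, smul_smul, mul_comm d,
    Finsupp.sum_add]

end

theorem Llam_sigma_automorphism_general (K : Type*) [Field K]
    (L : Type*) [LieRing L] [LieAlgebra K L] (B : Module.Basis ℕ K L)
    (lam : ℕ →₀ K)
    (ha : ∀ i, 1 ≤ i → ⁅B 0, B i⁆ = B (i + 1))
    (h1 : ∀ i, 2 ≤ i → ⁅B 1, B i⁆ = lam.sum fun j c => c • B (1 + i + j))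
    (h2 : ∀ i, 2 ≤ i → ∀ j, 2 ≤ j → ⁅B i, B j⁆ = 0)
    (d : K) (k : ℕ) (hk : 2 ≤ k)
    (φ : L →ₗ[K] L)
    (hφa : φ (B 0) = B 0)
    (hφ1 : φ (B 1) = B 1 + d • B k)
    (hφrec : ∀ i, 1 ≤ i → φ (B (i + 1)) = ⁅φ (B 0), φ (B i)⁆) :
    (∀ i, 1 ≤ i → φ (B i) = B i + d • B (k + i - 1)) ∧
    ⁅φ (B 1), φ (B 2)⁆ = lam.sum fun i c => c • φ (B (3 + i)) := by
  rw [hφa] at hφrec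
  have hφB := eq_add_smul_shift_of_lie_succ (u := fun i => φ (B i)) (by omega) ha hφ1 hφrec
  exact ⟨hφB, lie_eq_sum_of_eq_add_smul_shift hk h1 h2 hφB⟩

/-- Let `φ` be the linear map of `L_(λ)` (basis `B` with `B 0 = a`,
`B i = eᵢ`) determined by `φ(a) = a`, `φ(e₁) = e₁ + d e_k` for some scalar `d`
and `k ≥ 2`, extended by `φ(e_{i+1}) = [φ(a), φ(eᵢ)]`.  Then
`φ(eᵢ) = eᵢ + d e_{k+i-1}` for all `i ≥ 1`, and
`[φ(e₁), φ(e₂)] = Σ_{i ≥ 1} λᵢ φ(e_{3+i})`; hence this change of basis does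
not alter the structure sequence `(λ)`. -/
theorem Llam_sigma_automorphism (K : Type*) [Field K] [CharZero K]
    (L : Type*) [LieRing L] [LieAlgebra K L] (B : Module.Basis ℕ K L)
    (lam : ℕ →₀ K) (hlam0 : lam 0 = 0)
    (ha : ∀ i, 1 ≤ i → ⁅B 0, B i⁆ = B (i + 1))
    (h1 : ∀ i, 2 ≤ i → ⁅B 1, B i⁆ = lam.sum fun j c => c • B (1 + i + j))
    (h2 : ∀ i, 2 ≤ i → ∀ j, 2 ≤ j → ⁅B i, B j⁆ = 0)
    (d : K) (k : ℕ) (hk : 2 ≤ k)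
    (φ : L →ₗ[K] L)
    (hφa : φ (B 0) = B 0)
    (hφ1 : φ (B 1) = B 1 + d • B k)
    (hφrec : ∀ i, 1 ≤ i → φ (B (i + 1)) = ⁅φ (B 0), φ (B i)⁆) :
    (∀ i, 1 ≤ i → φ (B i) = B i + d • B (k + i - 1)) ∧
    ⁅φ (B 1), φ (B 2)⁆ = lam.sum fun i c => c • φ (B (3 + i)) :=
  Llam_sigma_automorphism_general K L B lam ha h1 h2 d k hk φ hφa hφ1 hφrec
end

section
/- Let φ be the linear map of L_{(λ)} determined by φ(a) = a + c·e_k for some scalar c and k ≥ 2, φ(e₁) = e₁, and extended by φ(e_{i+1}) = [φ(a), φ(eᵢ)]. Then φ(eⱼ) = eⱼ − c·Σ_{r≥1} λ_r e_{k+j-1+r} for all j ≥ 2, and [φ(e₁), φ(e₂)] = Σ_{i≥1} λᵢ φ(e_{3+i}); hence this change of basis does not alter the structure sequence (λ). -/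
/-!
Write `S n = Σ_r λ_r e_{n+r}`, so that `[e₁, eᵢ] = S (1 + i)` for `i ≥ 2`.  Since `e_k` commutes
with every `eᵢ`, `i ≥ 2`, bracketing with `φ(a) = a + c e_k` shifts indices exactly as `a` does,
and an induction from `φ(e₂) = [a + c e_k, e₁] = e₂ - c S (k + 1)` gives
`φ(eⱼ) = eⱼ - c S (k + j - 1)`.  Then both `[φ(e₁), φ(e₂)]` and `Σᵢ λᵢ φ(e_{3+i})` expand to
`S 3 - c Σ_{i,r} λᵢ λ_r e_{k+2+i+r}`.
-/

section ShiftedSum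

variable {R L : Type*} [CommRing R] [LieRing L] [LieAlgebra R L]

def shiftedSum (lam : ℕ →₀ R) (e : ℕ → L) (n : ℕ) : L :=
  lam.sum fun r cr => cr • e (n + r)

theorem lie_shiftedSum (x : L) (lam : ℕ →₀ R) (e : ℕ → L) (n : ℕ) :
    ⁅x, shiftedSum lam e n⁆ = lam.sum fun r cr => cr • ⁅x, e (n + r)⁆ := by
  simp only [shiftedSum, Finsupp.sum, lie_sum, lie_smul]

theorem lie_shiftedSum_of_lie_eq_succ {x : L} {e : ℕ → L} {n : ℕ}
    (hx : ∀ m, n ≤ m → ⁅x, e m⁆ = e (m + 1)) (lam : ℕ →₀ R) :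
    ⁅x, shiftedSum lam e n⁆ = shiftedSum lam e (n + 1) := by
  rw [lie_shiftedSum]
  refine Finsupp.sum_congr fun r _ => ?_
  rw [hx (n + r) (by omega), Nat.add_right_comm]

theorem lie_shiftedSum_eq_zero {x : L} {e : ℕ → L} {n : ℕ}
    (hx : ∀ m, n ≤ m → ⁅x, e m⁆ = 0) (lam : ℕ →₀ R) :
    ⁅x, shiftedSum lam e n⁆ = 0 := by
  rw [lie_shiftedSum]
  exact Finset.sum_eq_zero fun r _ => by simp only [hx (n + r) (by omega), smul_zero]

theorem finsupp_sum_smul_sub_smul (lam : ℕ →₀ R) (f g : ℕ → L) (c : R) :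
    (lam.sum fun i ci => ci • (f i - c • g i)) =
      (lam.sum fun i ci => ci • f i) - c • lam.sum fun i ci => ci • g i := by
  simp only [Finsupp.sum, Finset.smul_sum, smul_sub, smul_comm c, Finset.sum_sub_distrib]

variable {e : ℕ → L} {lam : ℕ →₀ R}

theorem apply_eq_sub_smul_shiftedSum
    (ha : ∀ i, 1 ≤ i → ⁅e 0, e i⁆ = e (i + 1))
    (h1 : ∀ i, 2 ≤ i → ⁅e 1, e i⁆ = shiftedSum lam e (1 + i))
    (h2 : ∀ i, 2 ≤ i → ∀ j, 2 ≤ j → ⁅e i, e j⁆ = 0)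
    {c : R} {k : ℕ} (hk : 2 ≤ k) {φ : L →ₗ[R] L}
    (hφa : φ (e 0) = e 0 + c • e k) (hφ1 : φ (e 1) = e 1)
    (hφrec : ∀ i, 1 ≤ i → φ (e (i + 1)) = ⁅φ (e 0), φ (e i)⁆) :
    ∀ j, 2 ≤ j → φ (e j) = e j - c • shiftedSum lam e (k + j - 1) := by
  intro j hj
  induction j, hj using Nat.le_induction with
  | base =>
    rw [hφrec 1 le_rfl, hφa, hφ1, add_lie, smul_lie, ha 1 le_rfl, ← lie_skew, h1 k hk,
      smul_neg, ← sub_eq_add_neg, Nat.add_comm 1 k]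
    rfl
  | succ j hj ih =>
    have hshift : ⁅e 0, shiftedSum lam e (k + j - 1)⁆ = shiftedSum lam e (k + (j + 1) - 1) := by
      rw [lie_shiftedSum_of_lie_eq_succ (fun m hm => ha m (by omega))]
      congr 1
      omega
    have hcomm : ⁅e k, shiftedSum lam e (k + j - 1)⁆ = 0 :=
      lie_shiftedSum_eq_zero (fun m hm => h2 k hk m (by omega)) lam
    rw [hφrec j (by omega), hφa, ih]
    simp only [add_lie, lie_sub, smul_lie, lie_smul, hshift, hcomm, ha j (by omega),
      h2 k hk j hj, smul_zero, add_zero]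

theorem lie_apply_one_apply_two
    (h1 : ∀ i, 2 ≤ i → ⁅e 1, e i⁆ = shiftedSum lam e (1 + i))
    {c : R} {k : ℕ} (hk : 1 ≤ k) {φ : L →ₗ[R] L} (hφ1 : φ (e 1) = e 1)
    (hφ : ∀ j, 2 ≤ j → φ (e j) = e j - c • shiftedSum lam e (k + j - 1)) :
    ⁅φ (e 1), φ (e 2)⁆ = lam.sum fun i ci => ci • φ (e (3 + i)) := by
  have hφ3 : ∀ i, φ (e (3 + i)) = e (3 + i) - c • shiftedSum lam e (k + 2 + i) := fun i => by
    rw [hφ (3 + i) (by omega)]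
    congr 3
    omega
  have hinner : ⁅e 1, shiftedSum lam e (k + 2 - 1)⁆ =
      lam.sum fun r cr => cr • shiftedSum lam e (k + 2 + r) := by
    rw [lie_shiftedSum]
    refine Finsupp.sum_congr fun r _ => ?_
    rw [h1 (k + 2 - 1 + r) (by omega), show 1 + (k + 2 - 1 + r) = k + 2 + r by omega]
  simp only [hφ3, finsupp_sum_smul_sub_smul, hφ1, hφ 2 le_rfl, lie_sub, lie_smul, hinner,
    h1 2 le_rfl]
  -- both double sums are `Σ_r Σ_i λ_r λ_i e_{k+2+r+i}`, with the bound variables named apart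
  rfl

end ShiftedSum

theorem Llam_tau_automorphism_general (K : Type*) [Field K]
    (L : Type*) [LieRing L] [LieAlgebra K L] (B : Module.Basis ℕ K L)
    (lam : ℕ →₀ K)
    (ha : ∀ i, 1 ≤ i → ⁅B 0, B i⁆ = B (i + 1))
    (h1 : ∀ i, 2 ≤ i → ⁅B 1, B i⁆ = lam.sum fun j cj => cj • B (1 + i + j))
    (h2 : ∀ i, 2 ≤ i → ∀ j, 2 ≤ j → ⁅B i, B j⁆ = 0)
    (c : K) (k : ℕ) (hk : 2 ≤ k)
    (φ : L →ₗ[K] L)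
    (hφa : φ (B 0) = B 0 + c • B k)
    (hφ1 : φ (B 1) = B 1)
    (hφrec : ∀ i, 1 ≤ i → φ (B (i + 1)) = ⁅φ (B 0), φ (B i)⁆) :
    (∀ j, 2 ≤ j → φ (B j) = B j - c • (lam.sum fun r cr => cr • B (k + j - 1 + r))) ∧
    ⁅φ (B 1), φ (B 2)⁆ = lam.sum fun i ci => ci • φ (B (3 + i)) := by
  have hφ := apply_eq_sub_smul_shiftedSum ha h1 h2 hk hφa hφ1 hφrec
  exact ⟨hφ, lie_apply_one_apply_two h1 (by omega) hφ1 hφ⟩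

/-- Let `φ` be the linear map of `L_(λ)` (basis `B` with `B 0 = a`,
`B i = eᵢ`) determined by `φ(a) = a + c e_k` for some scalar `c` and `k ≥ 2`,
`φ(e₁) = e₁`, extended by `φ(e_{i+1}) = [φ(a), φ(eᵢ)]`.  Then
`φ(eⱼ) = eⱼ − c Σ_{r ≥ 1} λ_r e_{k+j-1+r}` for all `j ≥ 2`, and
`[φ(e₁), φ(e₂)] = Σ_{i ≥ 1} λᵢ φ(e_{3+i})`; hence this change of basis does
not alter the structure sequence `(λ)`. -/
theorem Llam_tau_automorphism (K : Type*) [Field K] [CharZero K]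
    (L : Type*) [LieRing L] [LieAlgebra K L] (B : Module.Basis ℕ K L)
    (lam : ℕ →₀ K) (hlam0 : lam 0 = 0)
    (ha : ∀ i, 1 ≤ i → ⁅B 0, B i⁆ = B (i + 1))
    (h1 : ∀ i, 2 ≤ i → ⁅B 1, B i⁆ = lam.sum fun j cj => cj • B (1 + i + j))
    (h2 : ∀ i, 2 ≤ i → ∀ j, 2 ≤ j → ⁅B i, B j⁆ = 0)
    (c : K) (k : ℕ) (hk : 2 ≤ k)
    (φ : L →ₗ[K] L)
    (hφa : φ (B 0) = B 0 + c • B k)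
    (hφ1 : φ (B 1) = B 1)
    (hφrec : ∀ i, 1 ≤ i → φ (B (i + 1)) = ⁅φ (B 0), φ (B i)⁆) :
    (∀ j, 2 ≤ j → φ (B j) = B j - c • (lam.sum fun r cr => cr • B (k + j - 1 + r))) ∧
    ⁅φ (B 1), φ (B 2)⁆ = lam.sum fun i ci => ci • φ (B (3 + i)) :=
  Llam_tau_automorphism_general K L B lam ha h1 h2 c k hk φ hφa hφ1 hφrec
end

section
/- Let φ be the linear automorphism of L_{(λ)} determined by φ(a) = c₀ a, φ(e₁) = d₁ e₁ with c₀, d₁ nonzero scalars, extended by φ(e_{i+1}) = [φ(a), φ(eᵢ)]. Then in the new basis the structure sequence (λ₁, λ₂, λ₃, ...) is transformed into (c₀^{-2} d₁ λ₁, c₀^{-3} d₁ λ₂, c₀^{-4} d₁ λ₃, ...), i.e., λ'_s = c₀^{-1-s} d₁ λ_s. -/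
/-! A linear map that scales `a` by `c₀` and `e₁` by `d₁`, and is extended by
`φ(e_{i+1}) = [φ(a), φ(eᵢ)]`, is diagonal: `φ(eᵢ) = c₀^{i-1} d₁ eᵢ`. Hence
`[φ(e₁), φ(e₂)] = c₀ d₁² [e₁, e₂] = Σ_s c₀ d₁² λ_s e_{3+s}`, while
`c₀^{-1-s} d₁ λ_s φ(e_{3+s}) = c₀^{-1-s} d₁ λ_s c₀^{2+s} d₁ e_{3+s}` is the same term. -/

theorem LinearMap.apply_lie_chain_eq_pow_mul_smul {K L : Type*} [CommRing K] [LieRing L]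
    [LieAlgebra K L] (a : L) (e : ℕ → L) (c d : K) (φ : L →ₗ[K] L)
    (ha : ∀ i, 1 ≤ i → ⁅a, e i⁆ = e (i + 1)) (hφa : φ a = c • a) (hφ1 : φ (e 1) = d • e 1)
    (hφrec : ∀ i, 1 ≤ i → φ (e (i + 1)) = ⁅φ a, φ (e i)⁆) (n : ℕ) :
    φ (e (n + 1)) = (c ^ n * d) • e (n + 1) := by
  induction n with
  | zero => simpa using hφ1
  | succ n ih =>
    rw [hφrec (n + 1) n.succ_pos, hφa, ih, lie_smul, smul_lie, ha (n + 1) n.succ_pos, smul_smul,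
      pow_succ']
    ring_nf

theorem Llam_nu_diag_automorphism_general (K : Type*) [Field K]
    (L : Type*) [LieRing L] [LieAlgebra K L] (B : Module.Basis ℕ K L)
    (lam : ℕ →₀ K)
    (ha : ∀ i, 1 ≤ i → ⁅B 0, B i⁆ = B (i + 1))
    (h1 : ∀ i, 2 ≤ i → ⁅B 1, B i⁆ = lam.sum fun j cj => cj • B (1 + i + j))
    (c₀ d₁ : K) (hc₀ : c₀ ≠ 0)
    (φ : L →ₗ[K] L)
    (hφa : φ (B 0) = c₀ • B 0)
    (hφ1 : φ (B 1) = d₁ • B 1)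
    (hφrec : ∀ i, 1 ≤ i → φ (B (i + 1)) = ⁅φ (B 0), φ (B i)⁆) :
    ⁅φ (B 1), φ (B 2)⁆ =
      lam.sum fun s cs => ((c₀⁻¹) ^ (1 + s) * d₁ * cs) • φ (B (3 + s)) := by
  have hφ : ∀ n, φ (B (n + 1)) = (c₀ ^ n * d₁) • B (n + 1) :=
    φ.apply_lie_chain_eq_pow_mul_smul (B 0) B c₀ d₁ ha hφa hφ1 hφrec
  rw [hφ1, hφ 1, lie_smul, smul_lie, h1 2 le_rfl, Finsupp.smul_sum, Finsupp.smul_sum]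
  refine Finsupp.sum_congr fun s _ => ?_
  rw [show 1 + 2 + s = (s + 2) + 1 by omega, hφ, smul_smul, smul_smul, smul_smul]
  congr 1
  rw [inv_pow]
  field_simp
  ring

/-- Let `φ` be the linear automorphism of `L_(λ)` (basis `B` with `B 0 = a`,
`B i = eᵢ`) determined by `φ(a) = c₀ a`, `φ(e₁) = d₁ e₁` with `c₀, d₁`
nonzero, extended by `φ(e_{i+1}) = [φ(a), φ(eᵢ)]`.  Then in the new basis the
structure sequence transforms as `λ'_s = c₀^{-1-s} d₁ λ_s`, i.e.
`[φ(e₁), φ(e₂)] = Σ_{s ≥ 1} (c₀^{-1-s} d₁ λ_s) φ(e_{3+s})`. -/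
theorem Llam_nu_diag_automorphism (K : Type*) [Field K] [CharZero K]
    (L : Type*) [LieRing L] [LieAlgebra K L] (B : Module.Basis ℕ K L)
    (lam : ℕ →₀ K) (hlam0 : lam 0 = 0)
    (ha : ∀ i, 1 ≤ i → ⁅B 0, B i⁆ = B (i + 1))
    (h1 : ∀ i, 2 ≤ i → ⁅B 1, B i⁆ = lam.sum fun j cj => cj • B (1 + i + j))
    (h2 : ∀ i, 2 ≤ i → ∀ j, 2 ≤ j → ⁅B i, B j⁆ = 0)
    (c₀ d₁ : K) (hc₀ : c₀ ≠ 0) (hd₁ : d₁ ≠ 0)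
    (φ : L →ₗ[K] L)
    (hφa : φ (B 0) = c₀ • B 0)
    (hφ1 : φ (B 1) = d₁ • B 1)
    (hφrec : ∀ i, 1 ≤ i → φ (B (i + 1)) = ⁅φ (B 0), φ (B i)⁆) :
    ⁅φ (B 1), φ (B 2)⁆ =
      lam.sum fun s cs => ((c₀⁻¹) ^ (1 + s) * d₁ * cs) • φ (B (3 + s)) :=
  Llam_nu_diag_automorphism_general K L B lam ha h1 c₀ d₁ hc₀ φ hφa hφ1 hφrec
end
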